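/- arXiv:2510.01969 — 7 statements merged into one kernel-verified Lean document; each statement's English description precedes it below -/
import Mathlib

section
/- Let K ≥ 1 and let b₁, ..., b_K be real numbers. Then the vector v* ∈ Δ_K with coordinates v*_i = exp(−b_i) / Σ_{j=1}^K exp(−b_j) is a minimizer of the minimax problem min_{v ∈ Δ_K} max_{m ∈ Δ_K} Σ_{i=1}^K ( −log(v_i) − b_i ) m_i. (Consequently, taking b_i = φ_i^{*c}(x̃) for a dual optimizer (φ_i^*), the softmax formula f_i^*(x̃) = exp(−φ_i^{*c}(x̃)) / Σ_j exp(−φ_j^{*c}(x̃)) defines an optimal robust classifier for the adversarial problem with the cross-entropy loss.) -/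
open scoped ENNReal BigOperators

noncomputable section

/-- Cross-entropy loss `ℓ_ce(v,i) = −log v_i` as a function of the `i`-th
coordinate `t = v_i ∈ [0,1]`, with value `+∞` at `t = 0`. -/
def lossCE (t : ℝ) : EReal := if 0 < t then ((-Real.log t : ℝ) : EReal) else ⊤

/-- The inner max-objective `max_{m ∈ Δ_K} ∑_i (ℓ_ce(v,i) − b_i) m_i`. -/
def ceMinimaxObj {K : ℕ} (b : Fin K → ℝ) (v : Fin K → ℝ) : EReal :=
  ⨆ m ∈ stdSimplex ℝ (Fin K),
    ∑ i, (m i : EReal) * (lossCE (v i) - (b i : EReal))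

/-!
Against the softmax vector `v*` every coordinate of the payoff is the same constant,
`−log v*_i − b_i = log ∑_j exp(−b_j)`, so the adversary gains nothing by its choice of `m` and
the value at `v*` is this constant. Any other `v ∈ Δ_K` has some coordinate `v_i ≤ v*_i`
(both sum to one); putting all the adversary's mass on that `i` already achieves at least
the same constant.
-/

open Real Finset

section Softmax

variable {ι : Type*} [Fintype ι]

def softmax (b : ι → ℝ) (i : ι) : ℝ := exp (-b i) / ∑ j, exp (-b j)

theorem softmax_mem_stdSimplex [Nonempty ι] (b : ι → ℝ) : softmax b ∈ stdSimplex ℝ ι := by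
  have hS : 0 < ∑ j, exp (-b j) := sum_pos (fun j _ => exp_pos _) univ_nonempty
  refine ⟨fun i => div_nonneg (exp_pos _).le hS.le, ?_⟩
  simp only [softmax, ← sum_div, div_self hS.ne']

theorem lossCE_softmax_sub [Nonempty ι] (b : ι → ℝ) (i : ι) :
    lossCE (softmax b i) - (b i : EReal) = ((log (∑ j, exp (-b j)) : ℝ) : EReal) := by
  have hS : 0 < ∑ j, exp (-b j) := sum_pos (fun j _ => exp_pos _) univ_nonempty
  rw [lossCE, softmax, if_pos (div_pos (exp_pos _) hS), log_div (exp_pos _).ne' hS.ne', log_exp,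
    ← EReal.coe_sub]
  ring_nf

end Softmax

theorem exists_le_of_mem_stdSimplex {ι : Type*} [Fintype ι] [Nonempty ι] {v w : ι → ℝ}
    (hv : v ∈ stdSimplex ℝ ι) (hw : w ∈ stdSimplex ℝ ι) : ∃ i, v i ≤ w i := by
  by_contra! h
  have := sum_lt_sum_of_nonempty univ_nonempty fun i _ => h i
  rw [hv.2, hw.2] at this
  exact lt_irrefl _ this

theorem lossCE_antitone : Antitone lossCE := by
  intro s t hst
  by_cases hs : 0 < s
  · rw [lossCE, lossCE, if_pos (hs.trans_le hst), if_pos hs, EReal.coe_le_coe_iff, neg_le_neg_iff]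
    exact log_le_log hs hst
  · rw [lossCE, lossCE, if_neg hs]
    exact le_top

theorem EReal.coe_finsetSum {ι : Type*} (s : Finset ι) (f : ι → ℝ) :
    ((∑ i ∈ s, f i : ℝ) : EReal) = ∑ i ∈ s, (f i : EReal) :=
  map_sum (⟨⟨Real.toEReal, EReal.coe_zero⟩, EReal.coe_add⟩ : ℝ →+ EReal) f s

theorem sum_coe_mul_const_of_mem_stdSimplex {ι : Type*} [Fintype ι] {m : ι → ℝ}
    (hm : m ∈ stdSimplex ℝ ι) (c : ℝ) : ∑ i, (m i : EReal) * (c : EReal) = c := by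
  simp only [← EReal.coe_mul, ← EReal.coe_finsetSum, ← sum_mul, hm.2, one_mul]

section MinimaxObj

variable {K : ℕ} (b : Fin K → ℝ)

theorem ceMinimaxObj_le_of_forall_eq {v : Fin K → ℝ} {c : ℝ}
    (hv : ∀ i, lossCE (v i) - (b i : EReal) = c) : ceMinimaxObj b v ≤ c :=
  iSup₂_le fun m hm => by simp only [hv, sum_coe_mul_const_of_mem_stdSimplex hm, le_refl]

theorem lossCE_sub_le_ceMinimaxObj (v : Fin K → ℝ) (i : Fin K) :
    lossCE (v i) - (b i : EReal) ≤ ceMinimaxObj b v := by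
  refine le_trans ?_ (le_iSup₂_of_le (Pi.single i 1) (single_mem_stdSimplex ℝ i) le_rfl)
  rw [sum_eq_single i (fun j _ hj => by simp [hj]) (by simp)]
  simp

end MinimaxObj

/-- Corollary 1.8 (finite-dimensional form): the softmax vector
`v*_i = exp(−b_i)/∑_j exp(−b_j)` minimizes
`min_{v ∈ Δ_K} max_{m ∈ Δ_K} ∑_i (−log v_i − b_i) m_i`. -/
theorem statement2 {K : ℕ} (hK : 1 ≤ K) (b : Fin K → ℝ) :
    (fun i => Real.exp (-(b i)) / ∑ j, Real.exp (-(b j))) ∈ stdSimplex ℝ (Fin K) ∧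
    ∀ v ∈ stdSimplex ℝ (Fin K),
      ceMinimaxObj b (fun i => Real.exp (-(b i)) / ∑ j, Real.exp (-(b j)))
        ≤ ceMinimaxObj b v := by
  have : Nonempty (Fin K) := Fin.pos_iff_nonempty.mp hK
  refine ⟨softmax_mem_stdSimplex b, fun v hv => ?_⟩
  obtain ⟨i, hi⟩ := exists_le_of_mem_stdSimplex hv (softmax_mem_stdSimplex b)
  calc ceMinimaxObj b (softmax b)
      ≤ ((log (∑ j, exp (-b j)) : ℝ) : EReal) :=
        ceMinimaxObj_le_of_forall_eq b (lossCE_softmax_sub b)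
    _ = lossCE (softmax b i) - (b i : EReal) := (lossCE_softmax_sub b i).symm
    _ ≤ lossCE (v i) - (b i : EReal) := EReal.sub_le_sub (lossCE_antitone hi) le_rfl
    _ ≤ ceMinimaxObj b v := lossCE_sub_le_ceMinimaxObj b v i
end
end

section
/- Let the loss be the cross-entropy loss ℓ_ce(v,i) = −log(v_i) and let the cost be the 0-∞ cost c_ε (c_ε(x, x̃) = 0 if d(x, x̃) ≤ ε and +∞ otherwise). Then the dual problem of Theorem 1.4 has the same value as the problem: infimum over tuples (ψ_i)_{i∈Y} ⊆ 𝒢₀ of −Σ_{i∈Y} ∫_X log(ψ_i(x_i)) dμ_i(x_i), subject to Σ_{i∈A} ψ_i(x_i) ≤ 1 for every A ⊆ Y and every x_A ∈ spt(μ_A) such that the closed ε-balls B_ε(x_i), i ∈ A, have a common point; here 𝒢₀ is the set of functions exp(φ) with φ ∈ 𝒢. Moreover, if (ψ_i^*) solves this problem, then (φ_i^* := log(ψ_i^*)) solves the dual problem of Theorem 1.4. -/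
open MeasureTheory Set Filter Topology Bornology
open scoped ENNReal BigOperators NNReal

noncomputable section

namespace AdvRobust

variable {X : Type*} {Y : Type*}

/-- The (topological) support of a Borel measure: points all of whose open
neighborhoods have positive measure. -/
def msupport [TopologicalSpace X] [MeasurableSpace X] (μ : Measure X) : Set X :=
  {x | ∀ U : Set X, IsOpen U → x ∈ U → 0 < μ U}

/-- Compactness/coercivity condition on a cost function. -/
def Coercive [MetricSpace X] (c : X → X → ℝ≥0∞) : Prop :=
  ∀ x x' : ℕ → X, IsBounded (Set.range x') →
    (∃ M : ℝ≥0∞, M ≠ ⊤ ∧ ∀ n, c (x n) (x' n) ≤ M) →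
    IsCompact (closure (Set.range fun n => (x n, x' n)))

/-- Assumption 1.2 on the cost function. -/
structure CostAssumption [MetricSpace X] (c : X → X → ℝ≥0∞) : Prop where
  lsc : LowerSemicontinuous (Function.uncurry c)
  diag : ∀ x, c x x = 0
  coer : Coercive c ∨ ∃ (B : ℝ≥0∞) (c₀ : X → X → ℝ≥0∞),
      0 < B ∧ B ≠ ⊤ ∧ Coercive c₀ ∧ ∀ x y, c x y = min (c₀ x y) B

/-- Assumption 1.1 on the loss function: convexity on the simplex, and
finiteness at some common point of the simplex. -/
structure LossAssumption [Fintype Y] (ℓ : (Y → ℝ) → Y → ℝ≥0∞) : Prop where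
  convex : ∀ i : Y, ∀ v ∈ stdSimplex ℝ Y, ∀ w ∈ stdSimplex ℝ Y, ∀ a b : ℝ,
      0 ≤ a → 0 ≤ b → a + b = 1 →
      ℓ (a • v + b • w) i ≤ ENNReal.ofReal a * ℓ v i + ENNReal.ofReal b * ℓ w i
  finite : ∃ v₀ ∈ stdSimplex ℝ Y, ∀ i : Y, ℓ v₀ i ≠ ⊤

/-- Optimal transport cost between two positive measures (`+∞` if there is
no coupling). -/
def OTCost [MeasurableSpace X] (c : X → X → ℝ≥0∞) (μ ν : Measure X) : ℝ≥0∞ :=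
  ⨅ (π : Measure (X × X)) (_ : π.map Prod.fst = μ) (_ : π.map Prod.snd = ν),
    ∫⁻ p, c p.1 p.2 ∂π

/-- The adversarial objective for a fixed classifier `f`. -/
def advObj [MeasurableSpace X] [Fintype Y]
    (c : X → X → ℝ≥0∞) (ℓ : (Y → ℝ) → Y → ℝ≥0∞) (μ : Y → Measure X)
    (f : X → Y → ℝ) : EReal :=
  ⨆ (μ' : Y → Measure X) (_ : ∀ i, IsFiniteMeasure (μ' i)),
    ((∑ i, ∫⁻ x, ℓ (f x) i ∂(μ' i) : ℝ≥0∞) : EReal)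
      - ((∑ i, OTCost c (μ i) (μ' i) : ℝ≥0∞) : EReal)

/-- The adversarial (learner-agnostic) value `V`. -/
def advValue [MeasurableSpace X] [Fintype Y]
    (c : X → X → ℝ≥0∞) (ℓ : (Y → ℝ) → Y → ℝ≥0∞) (μ : Y → Measure X) : EReal :=
  ⨅ (f : X → Y → ℝ) (_ : Measurable f) (_ : ∀ x, f x ∈ stdSimplex ℝ Y),
    advObj c ℓ μ f

/-- `c`-transform of `φ` relative to the set `S`. -/
def cTransform (c : X → X → ℝ≥0∞) (S : Set X) (φ : X → ℝ) (x' : X) : EReal :=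
  ⨅ x ∈ S, ((c x x' : EReal) - (φ x : EReal))

/-- The probability simplex over a subset `A` of labels. -/
def simplexOn [Fintype Y] (A : Finset Y) : Set (Y → ℝ) :=
  {m | (∀ i, 0 ≤ m i) ∧ (∀ i ∉ A, m i = 0) ∧ ∑ i ∈ A, m i = 1}

/-- `ℓ_A(m_A) = inf_{v ∈ Δ_Y} ∑_{i ∈ A} ℓ(v,i) m_i`. -/
def lossOn [Fintype Y] (ℓ : (Y → ℝ) → Y → ℝ≥0∞) (A : Finset Y) (m : Y → ℝ) : ℝ≥0∞ :=
  ⨅ v ∈ stdSimplex ℝ Y, ∑ i ∈ A, ENNReal.ofReal (m i) * ℓ v i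

/-- `c_A(x_A, m_A) = inf_{x̃ ∈ X} ∑_{i ∈ A} m_i c(x_i, x̃)`. -/
def costOn (c : X → X → ℝ≥0∞) (A : Finset Y) (x : Y → X) (m : Y → ℝ) : ℝ≥0∞ :=
  ⨅ x' : X, ∑ i ∈ A, ENNReal.ofReal (m i) * c (x i) x'

/-- Feasibility constraint of the dual problem (1.12). -/
def dualConstraint [TopologicalSpace X] [MeasurableSpace X] [Fintype Y]
    (c : X → X → ℝ≥0∞) (ℓ : (Y → ℝ) → Y → ℝ≥0∞) (μ : Y → Measure X)
    (φ : Y → X → ℝ) : Prop :=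
  ∀ (A : Finset Y) (x : Y → X), (∀ i ∈ A, x i ∈ msupport (μ i)) →
    (⨆ m ∈ simplexOn A,
      (((∑ i ∈ A, m i * φ i (x i) : ℝ) : EReal)
        + (lossOn ℓ A m : EReal) - (costOn c A x m : EReal))) ≤ 0

/-- Value of the dual problem (1.12) over tuples of bounded continuous functions. -/
def dualValueCb [MetricSpace X] [MeasurableSpace X] [Fintype Y]
    (c : X → X → ℝ≥0∞) (ℓ : (Y → ℝ) → Y → ℝ≥0∞) (μ : Y → Measure X) : EReal :=
  ⨅ (φ : Y → BoundedContinuousFunction X ℝ)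
    (_ : dualConstraint c ℓ μ (fun i => (φ i : X → ℝ))),
    (((- ∑ i, ∫ x, φ i x ∂(μ i)) : ℝ) : EReal)

/-- Value of the dual problem (1.12) over tuples from a family `G` of functions. -/
def dualValueG [TopologicalSpace X] [MeasurableSpace X] [Fintype Y]
    (c : X → X → ℝ≥0∞) (ℓ : (Y → ℝ) → Y → ℝ≥0∞) (μ : Y → Measure X)
    (G : Set (X → ℝ)) : EReal :=
  ⨅ (φ : Y → X → ℝ) (_ : ∀ i, φ i ∈ G) (_ : dualConstraint c ℓ μ φ),
    (((- ∑ i, ∫ x, φ i x ∂(μ i)) : ℝ) : EReal)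

/-- The nonnegative part of an extended real, as an extended nonnegative real. -/
def epos (e : EReal) : ℝ≥0∞ := if e = ⊤ then ⊤ else ENNReal.ofReal e.toReal

/-- Extended integral of an extended-real-valued function. -/
def eintegral [MeasurableSpace X] (μ : Measure X) (g : X → EReal) : EReal :=
  ((∫⁻ x, epos (g x) ∂μ : ℝ≥0∞) : EReal) - ((∫⁻ x, epos (-(g x)) ∂μ : ℝ≥0∞) : EReal)


/-- Cross-entropy loss on the simplex, with values in `[0,∞]`. -/
def lossCE' (t : ℝ) : ℝ≥0∞ := if 0 < t then ENNReal.ofReal (-Real.log t) else ⊤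

/-- The `0`-`∞` cost with adversarial budget `ε`. -/
def costEps {X : Type*} [MetricSpace X] (ε : ℝ) : X → X → ℝ≥0∞ :=
  fun x y => if dist x y ≤ ε then 0 else ⊤

/-- Constraint of problem (1.19): `∑_{i ∈ A} ψ_i(x_i) ≤ 1` whenever the closed
`ε`-balls around the points `x_i`, `i ∈ A`, have a common point. -/
def ballConstraint {X Y : Type*} [MetricSpace X] [MeasurableSpace X] [Fintype Y]
    (μ : Y → Measure X) (ε : ℝ) (ψ : Y → X → ℝ) : Prop :=
  ∀ (A : Finset Y) (x : Y → X), (∀ i ∈ A, x i ∈ msupport (μ i)) →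
    (∃ z : X, ∀ i ∈ A, dist z (x i) ≤ ε) →
    ∑ i ∈ A, ψ i (x i) ≤ 1

/-!
On the simplex, the cross-entropy term `ℓ_A(m)` is exactly the Shannon entropy `H(m)` (by Gibbs'
inequality), and the `0`-`∞` cost `c_A(x, m)` is `0` when the `ε`-balls around the points `x_i`
with `m_i > 0` meet and `+∞` otherwise. The dual constraint at `x_A` therefore reads
`∑ m_i φ_i(x_i) + H(m) ≤ 0` for every `m` supported on a set `B ⊆ A` whose balls meet. By the
Gibbs variational principle the supremum of the left side over such `m` is
`log ∑_{i ∈ B} exp φ_i(x_i)`, attained at the softmax weights, so the constraint says exactly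
`∑_{i ∈ B} exp φ_i(x_i) ≤ 1`. Hence `φ ↦ exp ∘ φ` maps the feasible set of the dual problem
onto that of the packing problem, and it preserves the objective.
-/

section Gibbs

open Real

lemma mul_add_negMulLog_le_exp_sub {m : ℝ} (hm : 0 < m) (a : ℝ) :
    m * a + negMulLog m ≤ exp a - m := by
  have h := log_le_sub_one_of_pos (div_pos (exp_pos a) hm)
  rw [log_div (exp_pos a).ne' hm.ne', log_exp] at h
  calc m * a + negMulLog m = m * (a - log m) := by rw [negMulLog]; ring
    _ ≤ m * (exp a / m - 1) := mul_le_mul_of_nonneg_left h hm.le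
    _ = exp a - m := by field_simp

variable {Y : Type*} {A : Finset Y} {m : Y → ℝ}

lemma sum_mul_add_negMulLog_le (h0 : ∀ i ∈ A, 0 ≤ m i) (h1 : ∑ i ∈ A, m i = 1) (a : Y → ℝ) :
    ∑ i ∈ A, (m i * a i + negMulLog (m i)) ≤ ∑ i ∈ A with m i ≠ 0, exp (a i) - 1 := by
  classical
  calc ∑ i ∈ A, (m i * a i + negMulLog (m i))
      = ∑ i ∈ A with m i ≠ 0, (m i * a i + negMulLog (m i)) :=
        (Finset.sum_filter_of_ne (p := fun i => m i ≠ 0)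
          fun i _ hi hmi => hi (by simp [hmi])).symm
    _ ≤ ∑ i ∈ A with m i ≠ 0, (exp (a i) - m i) := by
        refine Finset.sum_le_sum fun i hi => ?_
        rw [Finset.mem_filter] at hi
        exact mul_add_negMulLog_le_exp_sub ((h0 i hi.1).lt_of_ne' hi.2) _
    _ = ∑ i ∈ A with m i ≠ 0, exp (a i) - 1 := by
        rw [Finset.sum_sub_distrib, Finset.sum_filter_ne_zero, h1]

lemma sum_softmax_mul_add_negMulLog (a : Y → ℝ) (hA : A.Nonempty)
    (hm : ∀ i ∈ A, m i = exp (a i) / ∑ j ∈ A, exp (a j)) :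
    ∑ i ∈ A, (m i * a i + negMulLog (m i)) = log (∑ j ∈ A, exp (a j)) := by
  have hS : 0 < ∑ j ∈ A, exp (a j) := Finset.sum_pos (fun j _ => exp_pos _) hA
  have hterm : ∀ i ∈ A, m i * a i + negMulLog (m i) = m i * log (∑ j ∈ A, exp (a j)) :=
    fun i hi => by
      rw [hm i hi, negMulLog, log_div (exp_pos _).ne' hS.ne', log_exp]
      ring
  rw [Finset.sum_congr rfl hterm, ← Finset.sum_mul, Finset.sum_congr rfl hm,
    ← Finset.sum_div, div_self hS.ne', one_mul]

end Gibbs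

section SimplexOn

variable {Y : Type*} [Fintype Y] {A : Finset Y} {m : Y → ℝ}

lemma simplexOn_subset_stdSimplex : simplexOn A ⊆ stdSimplex ℝ Y := fun m hm => by
  refine ⟨hm.1, ?_⟩
  rw [← Finset.sum_subset (Finset.subset_univ A) fun i _ hi => hm.2.1 i hi]
  exact hm.2.2

lemma sum_negMulLog_nonneg_of_mem_simplexOn (hm : m ∈ simplexOn A) :
    0 ≤ ∑ i ∈ A, Real.negMulLog (m i) :=
  Finset.sum_nonneg fun i _ =>
    Real.negMulLog_nonneg (hm.1 i) (mem_Icc_of_mem_stdSimplex (simplexOn_subset_stdSimplex hm) i).2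

end SimplexOn

section CrossEntropy

open Real

lemma ofReal_mul_lossCE' {m v : ℝ} (hm : 0 ≤ m) (hv : 0 < m → 0 < v) :
    ENNReal.ofReal m * lossCE' v = ENNReal.ofReal (m * -log v) := by
  rcases hm.eq_or_lt with rfl | hm
  · simp
  · rw [lossCE', if_pos (hv hm), ENNReal.ofReal_mul hm.le]

lemma ofReal_mul_lossCE'_of_nonpos {m v : ℝ} (hm : 0 < m) (hv : v ≤ 0) :
    ENNReal.ofReal m * lossCE' v = ⊤ := by
  rw [lossCE', if_neg hv.not_gt, ENNReal.mul_top (ENNReal.ofReal_pos.2 hm).ne']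

variable {Y : Type*} [Fintype Y] {A : Finset Y} {m : Y → ℝ}

-- Gibbs' inequality: `∑ m_i (-log v_i) ≥ H(m)` for `v ∈ Δ_Y`, with equality at `v = m`.
lemma lossOn_lossCE' (hm : m ∈ simplexOn A) :
    lossOn (fun v i => lossCE' (v i)) A m = ENNReal.ofReal (∑ i ∈ A, negMulLog (m i)) := by
  have hmΔ := simplexOn_subset_stdSimplex hm
  refine le_antisymm ((iInf₂_le m hmΔ).trans_eq ?_) (le_iInf₂ fun v hv => ?_)
  · rw [ENNReal.ofReal_sum_of_nonneg fun i _ =>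
      negMulLog_nonneg (hm.1 i) (mem_Icc_of_mem_stdSimplex hmΔ i).2]
    exact Finset.sum_congr rfl fun i _ => by
      rw [ofReal_mul_lossCE' (hm.1 i) id, negMulLog, neg_mul_comm]
  by_cases hsupp : ∀ i ∈ A, 0 < m i → 0 < v i
  · have hlog : ∀ i, 0 ≤ -log (v i) := fun i =>
      neg_nonneg.2 (log_nonpos (hv.1 i) (mem_Icc_of_mem_stdSimplex hv i).2)
    rw [Finset.sum_congr rfl fun i hi => ofReal_mul_lossCE' (hm.1 i) (hsupp i hi),
      ← ENNReal.ofReal_sum_of_nonneg fun i _ => mul_nonneg (hm.1 i) (hlog i)]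
    refine ENNReal.ofReal_le_ofReal ?_
    have hgibbs := sum_mul_add_negMulLog_le (fun i _ => hm.1 i) hm.2.2 fun i => log (v i)
    have hexp : ∑ i ∈ A with m i ≠ 0, exp (log (v i)) ≤ 1 := by
      rw [← hv.2]
      refine (Finset.sum_le_sum fun i hi => (exp_log ?_).le).trans
        (Finset.sum_le_univ_sum_of_nonneg hv.1)
      rw [Finset.mem_filter] at hi
      exact hsupp i hi.1 ((hm.1 i).lt_of_ne' hi.2)
    rw [Finset.sum_add_distrib] at hgibbs
    have : ∑ i ∈ A, m i * -log (v i) = -∑ i ∈ A, m i * log (v i) := by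
      simp only [mul_neg, Finset.sum_neg_distrib]
    linarith
  · push Not at hsupp
    obtain ⟨i, hi, hmi, hvi⟩ := hsupp
    exact le_top.trans_eq
      (ENNReal.sum_eq_top.2 ⟨i, hi, ofReal_mul_lossCE'_of_nonpos hmi hvi⟩).symm

end CrossEntropy

section ZeroInfinityCost

variable {X Y : Type*} [MetricSpace X] {ε : ℝ} {A : Finset Y} {x : Y → X} {m : Y → ℝ}

lemma costOn_costEps_of_exists (z : X) (hz : ∀ i ∈ A, m i ≠ 0 → dist z (x i) ≤ ε) :
    costOn (costEps ε) A x m = 0 :=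
  nonpos_iff_eq_zero.1 <| (iInf_le _ z).trans_eq <| Finset.sum_eq_zero fun i hi => by
    by_cases hmi : m i = 0
    · simp [hmi]
    · rw [costEps, if_pos (dist_comm z (x i) ▸ hz i hi hmi), mul_zero]

lemma costOn_costEps_of_not_exists (h0 : ∀ i, 0 ≤ m i)
    (h : ¬ ∃ z : X, ∀ i ∈ A, m i ≠ 0 → dist z (x i) ≤ ε) :
    costOn (costEps ε) A x m = ⊤ := by
  refine iInf_eq_top.2 fun z => ?_
  push Not at h
  obtain ⟨i, hi, hmi, hd⟩ := h z
  refine ENNReal.sum_eq_top.2 ⟨i, hi, ?_⟩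
  rw [costEps, if_neg (dist_comm z (x i) ▸ hd).not_ge,
    ENNReal.mul_top (ENNReal.ofReal_pos.2 ((h0 i).lt_of_ne' hmi)).ne']

end ZeroInfinityCost

section DualConstraint

open Real

variable {X Y : Type*} [MetricSpace X] [Fintype Y]
  {ε : ℝ} {A : Finset Y} {x : Y → X} {m : Y → ℝ} {φ : Y → X → ℝ}

lemma dualObjective_of_exists (hm : m ∈ simplexOn A)
    (hz : ∃ z : X, ∀ i ∈ A, m i ≠ 0 → dist z (x i) ≤ ε) :
    ((∑ i ∈ A, m i * φ i (x i) : ℝ) : EReal) + (lossOn (fun v i => lossCE' (v i)) A m : EReal)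
        - (costOn (costEps ε) A x m : EReal)
      = ((∑ i ∈ A, (m i * φ i (x i) + negMulLog (m i)) : ℝ) : EReal) := by
  obtain ⟨z, hz⟩ := hz
  rw [lossOn_lossCE' hm, costOn_costEps_of_exists z hz, EReal.coe_ennreal_ofReal,
    max_eq_left (sum_negMulLog_nonneg_of_mem_simplexOn hm), EReal.coe_ennreal_zero, sub_zero,
    ← EReal.coe_add, Finset.sum_add_distrib]

lemma dualObjective_of_not_exists (hm : m ∈ simplexOn A)
    (hz : ¬ ∃ z : X, ∀ i ∈ A, m i ≠ 0 → dist z (x i) ≤ ε) :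
    ((∑ i ∈ A, m i * φ i (x i) : ℝ) : EReal) + (lossOn (fun v i => lossCE' (v i)) A m : EReal)
        - (costOn (costEps ε) A x m : EReal) = ⊥ := by
  rw [costOn_costEps_of_not_exists hm.1 hz, EReal.coe_ennreal_top, EReal.sub_top]

variable [MeasurableSpace X]

variable (ε) in
lemma ballConstraint_exp_of_dualConstraint (μ : Y → Measure X)
    (h : dualConstraint (costEps ε) (fun v i => lossCE' (v i)) μ φ) :
    ballConstraint μ ε (fun i x => exp (φ i x)) := by
  classical
  intro A x hx ⟨z, hz⟩
  rcases A.eq_empty_or_nonempty with rfl | hA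
  · simp
  set S := ∑ i ∈ A, exp (φ i (x i))
  have hS : 0 < S := Finset.sum_pos (fun i _ => exp_pos _) hA
  set m : Y → ℝ := fun i => if i ∈ A then exp (φ i (x i)) / S else 0
  have hmA : ∀ i ∈ A, m i = exp (φ i (x i)) / S := fun i hi => if_pos hi
  have hm : m ∈ simplexOn A := by
    refine ⟨fun i => ?_, fun i hi => if_neg hi, ?_⟩
    · by_cases hi : i ∈ A
      · exact (hmA i hi).symm ▸ (div_pos (exp_pos _) hS).le
      · exact (if_neg hi).symm.le
    · rw [Finset.sum_congr rfl hmA, ← Finset.sum_div, div_self hS.ne']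
  -- at the softmax weights `m` the dual objective equals `log S`
  have hsup := (le_iSup₂ (f := fun m (_ : m ∈ simplexOn A) =>
    ((∑ i ∈ A, m i * φ i (x i) : ℝ) : EReal) + (lossOn (fun v i => lossCE' (v i)) A m : EReal)
      - (costOn (costEps ε) A x m : EReal)) m hm).trans (h A x hx)
  rw [dualObjective_of_exists hm ⟨z, fun i hi _ => hz i hi⟩,
    sum_softmax_mul_add_negMulLog (fun i => φ i (x i)) hA hmA] at hsup
  exact (log_nonpos_iff hS.le).1 (EReal.coe_nonpos.1 hsup)

variable (ε) in
lemma dualConstraint_of_ballConstraint_exp (μ : Y → Measure X)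
    (h : ballConstraint μ ε (fun i x => exp (φ i x))) :
    dualConstraint (costEps ε) (fun v i => lossCE' (v i)) μ φ := by
  classical
  intro A x hx
  refine iSup₂_le fun m hm => ?_
  by_cases hz : ∃ z : X, ∀ i ∈ A, m i ≠ 0 → dist z (x i) ≤ ε
  · rw [dualObjective_of_exists hm hz, ← EReal.coe_zero, EReal.coe_le_coe_iff]
    obtain ⟨z, hz⟩ := hz
    have hpack : ∑ i ∈ A with m i ≠ 0, exp (φ i (x i)) ≤ 1 :=
      h _ x (fun i hi => hx i (Finset.mem_filter.1 hi).1)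
        ⟨z, fun i hi => hz i (Finset.mem_filter.1 hi).1 (Finset.mem_filter.1 hi).2⟩
    linarith [sum_mul_add_negMulLog_le (fun i _ => hm.1 i) hm.2.2 fun i => φ i (x i)]
  · rw [dualObjective_of_not_exists hm hz]
    exact bot_le

lemma dualConstraint_iff_ballConstraint_exp (ε : ℝ) (μ : Y → Measure X) :
    dualConstraint (costEps ε) (fun v i => lossCE' (v i)) μ φ ↔
      ballConstraint μ ε (fun i x => exp (φ i x)) :=
  ⟨ballConstraint_exp_of_dualConstraint ε μ, dualConstraint_of_ballConstraint_exp ε μ⟩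

end DualConstraint

lemma iInf_exp_reparam {X Y α : Type*} [CompleteLattice α] (G : Set (X → ℝ))
    {Q P : (Y → X → ℝ) → Prop} {J F : (Y → X → ℝ) → α}
    (hQ : ∀ φ, Q (fun i x => Real.exp (φ i x)) ↔ P φ)
    (hJ : ∀ φ, J (fun i x => Real.exp (φ i x)) = F φ) :
    (⨅ (ψ : Y → X → ℝ)
        (_ : ∀ i, ψ i ∈ {ψ' : X → ℝ | ∃ φ ∈ G, ψ' = fun x => Real.exp (φ x)}) (_ : Q ψ), J ψ)
      = ⨅ (φ : Y → X → ℝ) (_ : ∀ i, φ i ∈ G) (_ : P φ), F φ := by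
  refine le_antisymm (le_iInf fun φ => le_iInf₂ fun hφ hP => ?_)
    (le_iInf fun ψ => le_iInf₂ fun hψ hQψ => ?_)
  · exact ((iInf_le _ fun i x => Real.exp (φ i x)).trans
      (iInf₂_le (fun i => ⟨φ i, hφ i, rfl⟩) ((hQ φ).2 hP))).trans_eq (hJ φ)
  · choose φ hφ hψφ using hψ
    obtain rfl : ψ = fun i x => Real.exp (φ i x) := funext hψφ
    exact ((iInf_le _ φ).trans (iInf₂_le hφ ((hQ φ).1 hQψ))).trans_eq (hJ φ).symm

theorem statement4_general
    {X Y : Type*} [MetricSpace X] [MeasurableSpace X] [Fintype Y]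
    (ε : ℝ) (μ : Y → Measure X) (G : Set (X → ℝ)) :
    (⨅ (ψ : Y → X → ℝ)
        (_ : ∀ i, ψ i ∈ {ψ' : X → ℝ | ∃ φ ∈ G, ψ' = fun x => Real.exp (φ x)})
        (_ : ballConstraint μ ε ψ),
        (((- ∑ i, ∫ x, Real.log (ψ i x) ∂(μ i)) : ℝ) : EReal))
      = dualValueG (costEps ε) (fun v i => lossCE' (v i)) μ G ∧
    ∀ ψs : Y → X → ℝ,
      (∀ i, ψs i ∈ {ψ' : X → ℝ | ∃ φ ∈ G, ψ' = fun x => Real.exp (φ x)}) →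
      ballConstraint μ ε ψs →
      ((((- ∑ i, ∫ x, Real.log (ψs i x) ∂(μ i)) : ℝ) : EReal)
        = ⨅ (ψ : Y → X → ℝ)
            (_ : ∀ i, ψ i ∈ {ψ' : X → ℝ | ∃ φ ∈ G, ψ' = fun x => Real.exp (φ x)})
            (_ : ballConstraint μ ε ψ),
            (((- ∑ i, ∫ x, Real.log (ψ i x) ∂(μ i)) : ℝ) : EReal)) →
      ((∀ i, (fun x => Real.log (ψs i x)) ∈ G) ∧
        dualConstraint (costEps ε) (fun v i => lossCE' (v i)) μ
          (fun i x => Real.log (ψs i x)) ∧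
        (((- ∑ i, ∫ x, Real.log (ψs i x) ∂(μ i)) : ℝ) : EReal)
          = dualValueG (costEps ε) (fun v i => lossCE' (v i)) μ G) := by
  have hvalue := iInf_exp_reparam G (fun φ => (dualConstraint_iff_ballConstraint_exp ε μ).symm)
    (J := fun ψ => (((- ∑ i, ∫ x, Real.log (ψ i x) ∂(μ i)) : ℝ) : EReal))
    (F := fun φ => (((- ∑ i, ∫ x, φ i x ∂(μ i)) : ℝ) : EReal))
    (fun φ => by simp only [Real.log_exp])
  refine ⟨hvalue, fun ψs hψs hball hopt => ?_⟩
  choose φ hφG hψφ using hψs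
  obtain rfl : ψs = fun i x => Real.exp (φ i x) := funext hψφ
  simp only [Real.log_exp] at hopt ⊢
  exact ⟨hφG, (dualConstraint_iff_ballConstraint_exp ε μ).2 hball, hopt.trans hvalue⟩

/-- Corollary 1.10: for the cross-entropy loss and the `0`-`∞` cost, the dual
problem (1.12) coincides with the `α`-fair-packing-type problem (1.19), and
solutions correspond via `φ = log ψ`. -/
theorem statement4
    {X Y : Type*} [MetricSpace X] [TopologicalSpace.SeparableSpace X] [CompleteSpace X]
    [MeasurableSpace X] [BorelSpace X] [Nonempty X]
    [Fintype Y] [Nonempty Y]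
    (ε : ℝ) (hε : 0 < ε)
    (μ : Y → Measure X) (hμfin : ∀ i, IsFiniteMeasure (μ i))
    (hμ1 : ∑ i, μ i Set.univ = 1)
    (G : Set (X → ℝ)) (hG : ∀ g ∈ G, Measurable g) :
    (⨅ (ψ : Y → X → ℝ)
        (_ : ∀ i, ψ i ∈ {ψ' : X → ℝ | ∃ φ ∈ G, ψ' = fun x => Real.exp (φ x)})
        (_ : ballConstraint μ ε ψ),
        (((- ∑ i, ∫ x, Real.log (ψ i x) ∂(μ i)) : ℝ) : EReal))
      = dualValueG (costEps ε) (fun v i => lossCE' (v i)) μ G ∧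
    ∀ ψs : Y → X → ℝ,
      (∀ i, ψs i ∈ {ψ' : X → ℝ | ∃ φ ∈ G, ψ' = fun x => Real.exp (φ x)}) →
      ballConstraint μ ε ψs →
      ((((- ∑ i, ∫ x, Real.log (ψs i x) ∂(μ i)) : ℝ) : EReal)
        = ⨅ (ψ : Y → X → ℝ)
            (_ : ∀ i, ψ i ∈ {ψ' : X → ℝ | ∃ φ ∈ G, ψ' = fun x => Real.exp (φ x)})
            (_ : ballConstraint μ ε ψ),
            (((- ∑ i, ∫ x, Real.log (ψ i x) ∂(μ i)) : ℝ) : EReal)) →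
      ((∀ i, (fun x => Real.log (ψs i x)) ∈ G) ∧
        dualConstraint (costEps ε) (fun v i => lossCE' (v i)) μ
          (fun i x => Real.log (ψs i x)) ∧
        (((- ∑ i, ∫ x, Real.log (ψs i x) ∂(μ i)) : ℝ) : EReal)
          = dualValueG (costEps ε) (fun v i => lossCE' (v i)) μ G) :=
  statement4_general ε μ G

end AdvRobust
end
end

section
/- Under the loss assumption and the cost assumption, the problem inf_{(φ_1,...,φ_K) ∈ 𝔄} −Σ_{i∈Y} ∫_X φ_i dμ_i, where 𝔄 := { (φ_1,...,φ_K) ∈ C_b(X)^K : min_{v∈Δ_Y} max_{m∈Δ_Y} Σ_{i∈Y} (ℓ(v,i) − φ_i^c(x̃)) m_i ≤ 0 for all x̃ ∈ X }, has the same value as the problem: infimum over (φ_i)_{i∈Y} ⊆ C_b(X) and Borel f : X → Δ_Y of −Σ_i ∫ φ_i dμ_i subject to −φ_i(x) + c(x, x̃) ≥ ℓ(f(x̃), i) for all x ∈ spt(μ_i), x̃ ∈ X, i ∈ Y. -/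
open MeasureTheory Set Filter Topology Bornology
open scoped ENNReal BigOperators NNReal

noncomputable section

namespace AdvRobust

variable {X : Type*} {Y : Type*}

/-! Every feasible pair `(φ, f)` of the second problem puts `φ` in `𝔄`, the min-max constraint
being witnessed by `v = f x̃`. Conversely, for `φ ∈ 𝔄` and `ε > 0` the constraint gives, for
each `x̃`, some `v` with `ℓ(v, i) < φ_i^c(x̃) + ε`. The cost assumption makes every `φ_i^c`
lower semicontinuous, so such a `v` still works near `x̃` as long as the set of labels with
`φ_i^c = ∞` does not change; a Lindelöf argument on these finitely many Borel pieces yields a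
Borel `f`. Then `(φ - ε, f)` is feasible and, the `μ_i` having total mass one, costs exactly
`ε` more. -/

lemma _root_.EReal.sub_coe_add_coe (d : EReal) (r s : ℝ) :
    d - r + s = d - ((r - s : ℝ) : EReal) := by
  rw [sub_eq_add_neg, sub_eq_add_neg, add_assoc, ← EReal.coe_neg, ← EReal.coe_add,
    ← EReal.coe_neg]
  ring_nf

lemma _root_.ENNReal.le_ofReal_of_coe_le {a : ℝ≥0∞} {r : ℝ} (h : (a : EReal) ≤ r) :
    a ≤ ENNReal.ofReal r := by
  rw [← EReal.coe_ennreal_le_coe_ennreal_iff, EReal.coe_ennreal_ofReal]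
  exact h.trans (EReal.coe_le_coe_iff.2 (le_max_left r 0))

section Semicontinuity

variable {α : Type*} [TopologicalSpace α]

lemma _root_.LowerSemicontinuous.ereal_add_const {g : α → EReal} (hg : LowerSemicontinuous g)
    (r : ℝ) : LowerSemicontinuous fun a => g a + r :=
  hg.add' lowerSemicontinuous_const fun _ =>
    EReal.continuousAt_add (.inr (EReal.coe_ne_bot r)) (.inr (EReal.coe_ne_top r))

lemma _root_.LowerSemicontinuous.ennreal_sub_continuous {g : α → ℝ≥0∞}
    (hg : LowerSemicontinuous g) {u : α → ℝ} (hu : Continuous u) :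
    LowerSemicontinuous fun a => (g a : EReal) - u a := by
  simp only [sub_eq_add_neg, ← EReal.coe_neg]
  refine (continuous_coe_ennreal_ereal.comp_lowerSemicontinuous hg
    fun _ _ => EReal.coe_ennreal_le_coe_ennreal_iff.2).add'
    (continuous_coe_real_ereal.comp hu.neg).lowerSemicontinuous fun a =>
      EReal.continuousAt_add (.inr (EReal.coe_ne_bot _)) (.inr (EReal.coe_ne_top _))

end Semicontinuity

lemma isClosed_msupport [TopologicalSpace X] [MeasurableSpace X] (μ : Measure X) :
    IsClosed (msupport μ) := by
  refine isOpen_compl_iff.1 <| isOpen_iff_forall_mem_open.2 fun x hx => ?_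
  simp only [msupport, mem_compl_iff, mem_ofPred_eq, not_forall, not_lt,
    nonpos_iff_eq_zero] at hx
  obtain ⟨U, hU, hxU, hμU⟩ := hx
  exact ⟨U, fun y hy hsupp => (hsupp U hU hy).ne' hμU, hU, hxU⟩

lemma Coercive.exists_subseq_tendsto [MetricSpace X] {d : X → X → ℝ≥0∞} (hd : Coercive d)
    {x z : ℕ → X} {x' : X} (hz : Tendsto z atTop (𝓝 x')) {M : ℝ≥0∞} (hM : M ≠ ⊤)
    (hxz : ∀ n, d (x n) (z n) ≤ M) :
    ∃ a, ∃ ψ : ℕ → ℕ, StrictMono ψ ∧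
      Tendsto (fun n => (x (ψ n), z (ψ n))) atTop (𝓝 (a, x')) := by
  obtain ⟨⟨a, b⟩, -, ψ, hψ, hlim⟩ :=
    (hd x z (Metric.isBounded_range_of_tendsto z hz) ⟨M, hM, hxz⟩).tendsto_subseq
      fun n => subset_closure (mem_range_self n)
  obtain rfl : b = x' :=
    tendsto_nhds_unique ((continuous_snd.tendsto _).comp hlim) (hz.comp hψ.tendsto_atTop)
  exact ⟨a, ψ, hψ, hlim⟩

section CTransform

variable [MetricSpace X] {c : X → X → ℝ≥0∞} {S : Set X} {φ : X → ℝ}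

lemma cTransform_le_of_tendsto (hc : LowerSemicontinuous (Function.uncurry c))
    (hS : IsClosed S) (hφ : Continuous φ) {x z : ℕ → X} {a x' : X} (hxS : ∀ n, x n ∈ S)
    (hlim : Tendsto (fun n => (x n, z n)) atTop (𝓝 (a, x'))) {y : EReal}
    (hy : ∀ n, (c (x n) (z n) : EReal) - φ (x n) ≤ y) : cTransform c S φ x' ≤ y := by
  have ha : a ∈ S :=
    hS.mem_of_tendsto ((continuous_fst.tendsto _).comp hlim) (Eventually.of_forall hxS)
  have hlsc := hc.ennreal_sub_continuous (hφ.comp continuous_fst)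
  exact (iInf₂_le a ha).trans <|
    (hlsc.isClosed_preimage y).mem_of_tendsto hlim (Eventually.of_forall hy)

lemma cTransform_le_of_tendsto_of_lt (hc : CostAssumption c) (hS : IsClosed S)
    (hφ : Continuous φ) {C : ℝ} (hφC : ∀ x, φ x ≤ C) {z : ℕ → X} {x' : X}
    (hz : Tendsto z atTop (𝓝 x')) {y : ℝ} (hzy : ∀ n, cTransform c S φ (z n) < y) :
    cTransform c S φ x' ≤ y := by
  have hx : ∀ n, ∃ x ∈ S, (c x (z n) : EReal) - φ x < y := fun n => by
    simpa only [cTransform, iInf_lt_iff, exists_prop] using hzy n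
  choose x hxS hxy using hx
  have hbound : ∀ n, c (x n) (z n) ≤ ENNReal.ofReal (y + C) := fun n => by
    refine ENNReal.le_ofReal_of_coe_le ?_
    have := (EReal.sub_lt_iff (.inl (EReal.coe_ne_bot _)) (.inl (EReal.coe_ne_top _))).1 (hxy n)
    exact this.le.trans (by rw [EReal.coe_add]; gcongr; exact_mod_cast hφC (x n))
  have hsubseq : ∀ (ψ : ℕ → ℕ) (a : X),
      Tendsto (fun n => (x (ψ n), z (ψ n))) atTop (𝓝 (a, x')) → cTransform c S φ x' ≤ y :=
    fun ψ a hlim =>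
      cTransform_le_of_tendsto hc.lsc hS hφ (fun n => hxS _) hlim fun n => (hxy _).le
  rcases hc.coer with hco | ⟨B, c₀, -, hB, hc₀, hmin⟩
  · obtain ⟨a, ψ, -, hlim⟩ := hco.exists_subseq_tendsto hz ENNReal.ofReal_ne_top hbound
    exact hsubseq ψ a hlim
  by_cases hfreq : ∃ᶠ n in atTop, c₀ (x n) (z n) ≤ B
  · obtain ⟨g, hg, hgB⟩ := extraction_of_frequently_atTop hfreq
    obtain ⟨a, ψ, -, hlim⟩ := hc₀.exists_subseq_tendsto (hz.comp hg.tendsto_atTop) hB hgB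
    exact hsubseq (g ∘ ψ) a hlim
  -- Otherwise some `c (x n) (z n)` is truncated to `B`, which dominates `c (x n) x'`.
  obtain ⟨n, hn⟩ := (not_frequently.1 hfreq).exists
  have hcB : c (x n) x' ≤ c (x n) (z n) := by
    rw [hmin, hmin, min_eq_right (not_le.1 hn).le]
    exact min_le_right _ _
  calc cTransform c S φ x' ≤ (c (x n) x' : EReal) - φ (x n) := iInf₂_le _ (hxS n)
    _ ≤ (c (x n) (z n) : EReal) - φ (x n) :=
        EReal.sub_le_sub (EReal.coe_ennreal_le_coe_ennreal_iff.2 hcB) le_rfl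
    _ ≤ y := (hxy n).le

lemma lowerSemicontinuous_cTransform (hc : CostAssumption c) (hS : IsClosed S)
    (hφ : Continuous φ) {C : ℝ} (hφC : ∀ x, φ x ≤ C) :
    LowerSemicontinuous (cTransform c S φ) := by
  refine lowerSemicontinuous_iff_isClosed_preimage.2 fun y => IsSeqClosed.isClosed ?_
  intro z x' hzy hz
  exact EReal.le_of_forall_lt_iff_le.1 fun r hr =>
    cTransform_le_of_tendsto_of_lt hc hS hφ hφC hz fun n => (hzy n).trans_lt hr

end CTransform

section Selection

variable [TopologicalSpace X] [SecondCountableTopology X] [MeasurableSpace X]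
  [OpensMeasurableSpace X] {V : Type*} [MeasurableSpace V]

theorem exists_measurable_forall_of_locally_on_fibers {ι : Type*} [MeasurableSpace ι]
    [MeasurableSingletonClass ι] [Countable ι] {T : X → ι} (hT : Measurable T)
    {P : X → V → Prop} (hloc : ∀ x₀, ∃ v, ∀ᶠ x in 𝓝 x₀, T x = T x₀ → P x v) :
    ∃ f : X → V, Measurable f ∧ ∀ x, P x (f x) := by
  classical
  rcases isEmpty_or_nonempty X with _ | _
  · exact ⟨isEmptyElim, Subsingleton.measurable, isEmptyElim⟩
  choose v U hUP hUo hxU using fun x₀ => (hloc x₀).imp fun _ h => eventually_nhds_iff.1 h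
  choose t htT htc hcov using fun i : ι => TopologicalSpace.countable_cover_nhdsWithin
    (s := T ⁻¹' {i}) fun x₀ _ => mem_nhdsWithin_of_mem_nhds ((hUo x₀).mem_nhds (hxU x₀))
  obtain ⟨e, he⟩ := Set.countable_iff_exists_subset_range.1 (countable_iUnion htc)
  have hex : ∀ x, ∃ n, x ∈ U (e n) ∧ T x = T (e n) := by
    intro x
    obtain ⟨x₀, hx₀, hxU⟩ := mem_iUnion₂.1 (hcov (T x) rfl)
    obtain ⟨n, rfl⟩ := he (mem_iUnion_of_mem _ hx₀)
    exact ⟨n, hxU, (htT _ hx₀).symm⟩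
  refine ⟨fun x => v (e (Nat.find (hex x))), Measurable.find (f := fun n _ => v (e n))
    (p := fun n x => x ∈ U (e n) ∧ T x = T (e n)) (fun n => measurable_const)
    (fun n => (hUo _).measurableSet.inter (hT (measurableSet_singleton _))) hex, fun x => ?_⟩
  obtain ⟨hU, hTx⟩ := Nat.find_spec (hex x)
  exact hUP _ x hU hTx

theorem exists_measurable_forall_le_add [Fintype Y] {h : Y → X → EReal}
    (hh : ∀ j, LowerSemicontinuous (h j)) {L : V → Y → EReal} {K : Set V} {ε : ℝ}
    (hex : ∀ x, ∃ v ∈ K, ∀ j, h j x ≠ ⊤ → L v j < h j x + ε) :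
    ∃ f : X → V, Measurable f ∧ ∀ x, f x ∈ K ∧ ∀ j, L (f x) j ≤ h j x + ε := by
  -- On each fibre of `x ↦ {j | h j x = ⊤}` the infinite constraints are void, and the finite
  -- ones are open conditions by lower semicontinuity.
  have hT : Measurable fun x j => h j x = ⊤ := measurable_pi_lambda _ fun j =>
    (measurableSet_setOfPred (p := fun x => h j x = ⊤)).1
      ((hh j).measurable (measurableSet_singleton ⊤))
  refine exists_measurable_forall_of_locally_on_fibers
    (P := fun x v => v ∈ K ∧ ∀ j, L v j ≤ h j x + ε) hT fun x₀ => ?_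
  obtain ⟨v, hvK, hv⟩ := hex x₀
  have hj : ∀ j, ∀ᶠ x in 𝓝 x₀, (fun j => h j x = ⊤) = (fun j => h j x₀ = ⊤) →
      L v j ≤ h j x + ε := fun j => by
    by_cases hj : h j x₀ = ⊤
    · refine Eventually.of_forall fun x hx => ?_
      rw [show h j x = ⊤ from (congrFun hx j).mpr hj, EReal.top_add_coe]
      exact le_top
    · filter_upwards [(hh j).ereal_add_const ε x₀ _ (hv j hj)] with x hx _ using hx.le
  refine ⟨v, ?_⟩
  filter_upwards [eventually_all.2 hj] with x hx hTx using ⟨hvK, fun j => hx j hTx⟩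

end Selection

section Minimax

variable [Fintype Y] {L : (Y → ℝ) → Y → EReal} {g : Y → EReal}

lemma iInf_iSup_stdSimplex_nonpos {v : Y → ℝ} (hv : v ∈ stdSimplex ℝ Y)
    (hvg : ∀ i, L v i ≤ g i) :
    ⨅ v ∈ stdSimplex ℝ Y, ⨆ m ∈ stdSimplex ℝ Y,
      ∑ i, (m i : EReal) * (L v i - g i) ≤ 0 :=
  iInf₂_le_of_le v hv <| iSup₂_le fun _ hm => Finset.sum_nonpos fun i _ =>
    mul_nonpos_of_nonneg_of_nonpos (EReal.coe_nonneg.2 (hm.1 i)) (EReal.sub_nonpos.2 (hvg i))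

lemma exists_forall_lt_add_of_iInf_iSup_lt (hL : ∀ v i, L v i ≠ ⊥) {r : ℝ}
    (h : ⨅ v ∈ stdSimplex ℝ Y, ⨆ m ∈ stdSimplex ℝ Y,
      ∑ i, (m i : EReal) * (L v i - g i) < r) :
    ∃ v ∈ stdSimplex ℝ Y, ∀ j, g j ≠ ⊤ → L v j < g j + r := by
  classical
  simp only [iInf_lt_iff, exists_prop] at h
  obtain ⟨v, hv, hlt⟩ := h
  refine ⟨v, hv, fun j hj => add_comm (r : EReal) _ ▸
    (EReal.sub_lt_iff (.inr (hL v j)) (.inl hj)).1 (lt_of_le_of_lt ?_ hlt)⟩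
  have hvertex := le_iSup₂ (f := fun (m : Y → ℝ) (_ : m ∈ stdSimplex ℝ Y) =>
    ∑ i, (m i : EReal) * (L v i - g i)) (Pi.single j 1) (single_mem_stdSimplex ℝ j)
  rwa [Fintype.sum_eq_single j fun i hi => by simp [hi], Pi.single_eq_same, EReal.coe_one,
    one_mul] at hvertex

end Minimax

lemma sum_integral_sub_const [MeasurableSpace X] [Fintype Y] {μ : Y → Measure X}
    [∀ i, IsFiniteMeasure (μ i)] (hμ : ∑ i, μ i univ = 1) {φ : Y → X → ℝ}
    (hφ : ∀ i, Integrable (φ i) (μ i)) (ε : ℝ) :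
    ∑ i, ∫ x, (φ i x - ε) ∂μ i = ∑ i, ∫ x, φ i x ∂μ i - ε := by
  have hmass : ∑ i, (μ i).real univ = 1 := by
    simp only [measureReal_def]
    rw [← ENNReal.toReal_sum fun i _ => measure_ne_top _ _, hμ, ENNReal.toReal_one]
  simp only [integral_sub (hφ _) (integrable_const ε), integral_const, smul_eq_mul,
    Finset.sum_sub_distrib, ← Finset.sum_mul, hmass, one_mul]

theorem statement10_general
    {X Y : Type*} [MetricSpace X] [TopologicalSpace.SeparableSpace X]
    [MeasurableSpace X] [BorelSpace X]
    [Fintype Y]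
    (c : X → X → ℝ≥0∞) (hc : CostAssumption c)
    (ℓ : (Y → ℝ) → Y → ℝ≥0∞)
    (μ : Y → Measure X) (hμfin : ∀ i, IsFiniteMeasure (μ i))
    (hμ1 : ∑ i, μ i Set.univ = 1) :
    (⨅ (φ : Y → BoundedContinuousFunction X ℝ)
        (_ : ∀ x' : X,
          (⨅ v ∈ stdSimplex ℝ Y, ⨆ m ∈ stdSimplex ℝ Y,
            ∑ i, (m i : EReal) *
              ((ℓ v i : EReal) - cTransform c (msupport (μ i)) (φ i) x')) ≤ 0),
        (((- ∑ i, ∫ x, φ i x ∂(μ i)) : ℝ) : EReal))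
    = ⨅ (φ : Y → BoundedContinuousFunction X ℝ)
        (f : X → Y → ℝ) (_ : Measurable f) (_ : ∀ x, f x ∈ stdSimplex ℝ Y)
        (_ : ∀ (i : Y) (x x' : X), x ∈ msupport (μ i) →
          (ℓ (f x') i : EReal) ≤ (c x x' : EReal) - (φ i x : EReal)),
        (((- ∑ i, ∫ x, φ i x ∂(μ i)) : ℝ) : EReal) := by
  refine le_antisymm (le_iInf fun φ => le_iInf fun f => le_iInf fun _ => le_iInf fun hfΔ =>
    le_iInf fun hf => iInf₂_le φ fun x' => ?_) (le_iInf₂ fun φ hφ => ?_)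
  · exact iInf_iSup_stdSimplex_nonpos (L := fun v i => ℓ v i) (hfΔ x') fun i =>
      le_iInf₂ fun x hx => hf i x x' hx
  have := UniformSpace.secondCountable_of_separable X
  refine EReal.le_of_forall_lt_iff_le.1 fun z hz => ?_
  obtain ⟨ε, hε, rfl⟩ : ∃ ε > 0, z = -∑ i, ∫ x, φ i x ∂μ i + ε :=
    ⟨z + ∑ i, ∫ x, φ i x ∂μ i, by linarith [EReal.coe_lt_coe_iff.1 hz], by ring⟩
  obtain ⟨f, hfm, hf⟩ := exists_measurable_forall_le_add
    (fun i => lowerSemicontinuous_cTransform hc (isClosed_msupport _) (φ i).continuous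
      (φ i).apply_le_norm)
    fun x' => exists_forall_lt_add_of_iInf_iSup_lt (L := fun v i => ℓ v i)
      (fun _ _ => EReal.coe_ennreal_ne_bot _) ((hφ x').trans_lt (EReal.coe_pos.2 hε))
  refine iInf_le_of_le (fun i => φ i - .const X ε) <| iInf_le_of_le f <| iInf_le_of_le hfm <|
    iInf_le_of_le (fun x => (hf x).1) <| iInf_le_of_le (fun i x x' hx => ?_) ?_
  · calc (ℓ (f x') i : EReal) ≤ cTransform c (msupport (μ i)) (φ i) x' + ε := (hf x').2 i
      _ ≤ (c x x' : EReal) - φ i x + ε := add_le_add_left (iInf₂_le x hx) _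
      _ = _ := by simp [EReal.sub_coe_add_coe]
  · have := hμfin
    simp only [BoundedContinuousFunction.coe_sub, Pi.sub_apply,
      BoundedContinuousFunction.const_apply',
      sum_integral_sub_const hμ1 (fun i => (φ i).integrable (μ i)) ε]
    exact EReal.coe_le_coe_iff.2 (by linarith)

/-- Proposition 2.2: the problem over the admissible class `𝔄` (bounded
continuous tuples whose `c`-transforms satisfy the pointwise min-max
constraint) has the same value as problem (2.2) with `𝒢 = C_b(X)`. -/
theorem statement10
    {X Y : Type*} [MetricSpace X] [TopologicalSpace.SeparableSpace X] [CompleteSpace X]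
    [MeasurableSpace X] [BorelSpace X] [Nonempty X]
    [Fintype Y] [Nonempty Y]
    (c : X → X → ℝ≥0∞) (hc : CostAssumption c)
    (ℓ : (Y → ℝ) → Y → ℝ≥0∞) (hℓ : LossAssumption ℓ)
    (μ : Y → Measure X) (hμfin : ∀ i, IsFiniteMeasure (μ i))
    (hμ1 : ∑ i, μ i Set.univ = 1) :
    (⨅ (φ : Y → BoundedContinuousFunction X ℝ)
        (_ : ∀ x' : X,
          (⨅ v ∈ stdSimplex ℝ Y, ⨆ m ∈ stdSimplex ℝ Y,
            ∑ i, (m i : EReal) *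
              ((ℓ v i : EReal) - cTransform c (msupport (μ i)) (φ i) x')) ≤ 0),
        (((- ∑ i, ∫ x, φ i x ∂(μ i)) : ℝ) : EReal))
    = ⨅ (φ : Y → BoundedContinuousFunction X ℝ)
        (f : X → Y → ℝ) (_ : Measurable f) (_ : ∀ x, f x ∈ stdSimplex ℝ Y)
        (_ : ∀ (i : Y) (x x' : X), x ∈ msupport (μ i) →
          (ℓ (f x') i : EReal) ≤ (c x x' : EReal) - (φ i x : EReal)),
        (((- ∑ i, ∫ x, φ i x ∂(μ i)) : ℝ) : EReal) :=
  statement10_general c hc ℓ μ hμfin hμ1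

end AdvRobust
end
end

section
/- Let X be a metric space, let c : X×X → [0,∞] be lower semicontinuous with c(x,x) = 0 for all x, satisfying the coercivity condition (whenever (x̃_n) is bounded and sup_n c(x_n, x̃_n) < ∞, the sequence (x_n, x̃_n) is precompact in X×X) or being of the form min{c₀, B} for such a c₀ and B > 0. Let φ : X → ℝ be continuous and bounded, and let S ⊆ X be a nonempty closed set (e.g., the support of a finite positive Borel measure). Then the function x̃ ↦ inf_{x ∈ S} { c(x, x̃) − φ(x) } is lower semicontinuous (and in particular Borel measurable). -/
open Bornology
open scoped ENNReal

noncomputable section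

/-- Compactness/coercivity condition on a cost function. -/
def Coercive {X : Type*} [MetricSpace X] (c : X → X → ℝ≥0∞) : Prop :=
  ∀ x x' : ℕ → X, IsBounded (Set.range x') →
    (∃ M : ℝ≥0∞, M ≠ ⊤ ∧ ∀ n, c (x n) (x' n) ≤ M) →
    IsCompact (closure (Set.range fun n => (x n, x' n)))

/-- Lemma B.1: the `c`-transform of a bounded continuous function, taken over
a nonempty closed set, is lower semicontinuous (hence Borel measurable). -/
theorem statement14 {X : Type*} [MetricSpace X]
    (c : X → X → ℝ≥0∞)
    (hlsc : LowerSemicontinuous (Function.uncurry c))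
    (hdiag : ∀ x, c x x = 0)
    (hcoer : Coercive c ∨ ∃ (B : ℝ≥0∞) (c₀ : X → X → ℝ≥0∞),
      0 < B ∧ B ≠ ⊤ ∧ Coercive c₀ ∧ ∀ x y, c x y = min (c₀ x y) B)
    (φ : X → ℝ) (hφcont : Continuous φ) (hφbdd : ∃ M : ℝ, ∀ x, |φ x| ≤ M)
    (S : Set X) (hS : S.Nonempty) (hSclosed : IsClosed S) :
    LowerSemicontinuous (fun x' : X => ⨅ x ∈ S, ((c x x' : EReal) - (φ x : EReal))) := by
  obtain ⟨M, hM⟩ := hφbdd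
  set f : X → EReal := fun x' => ⨅ x ∈ S, ((c x x' : EReal) - (φ x : EReal)) with hfdef
  -- the integrand, as a function on X × X, is lower semicontinuous
  have hg : LowerSemicontinuous (fun p : X × X => (c p.1 p.2 : EReal) - (φ p.1 : EReal)) := by
    have h1 : LowerSemicontinuous (fun p : X × X => (c p.1 p.2 : EReal)) := by
      have := continuous_coe_ennreal_ereal.comp_lowerSemicontinuous hlsc
        (fun a b h => EReal.coe_ennreal_le_coe_ennreal_iff.2 h)
      exact this
    have h2 : Continuous (fun p : X × X => ((-(φ p.1) : ℝ) : EReal)) :=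
      continuous_coe_real_ereal.comp ((hφcont.comp continuous_fst).neg)
    have h3 := h1.add' h2.lowerSemicontinuous (fun p => EReal.continuousAt_add
      (Or.inr (EReal.coe_ne_bot _)) (Or.inl (EReal.coe_ennreal_ne_bot _)))
    simpa [sub_eq_add_neg, EReal.coe_neg] using h3
  intro x' y hy
  by_contra hcon
  have hfreq : ∃ᶠ z in nhds x', f z ≤ y := by
    simpa [Filter.not_eventually, not_lt] using hcon
  obtain ⟨u, hu, hule⟩ := Filter.exists_seq_forall_of_frequently hfreq
  -- pick a real number strictly between `y` and `f x'`
  obtain ⟨z₀, hz1, hz2⟩ := exists_between hy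
  lift z₀ to ℝ using ⟨hz2.ne_top, (lt_of_le_of_lt bot_le hz1).ne'⟩ with z hzeq
  -- choose near-optimal points in S
  have hvex : ∀ n, ∃ x, x ∈ S ∧ (c x (u n) : EReal) - (φ x : EReal) < (z : EReal) := by
    intro n
    have hlt : f (u n) < (z : EReal) := lt_of_le_of_lt (hule n) hz1
    by_contra hcontra
    push_neg at hcontra
    have : (z : EReal) ≤ f (u n) := le_iInf₂ fun x hx => hcontra x hx
    exact absurd hlt (not_lt.2 this)
  choose v hvS hvlt using hvex
  have hfle : ∀ a, a ∈ S → f x' ≤ (c a x' : EReal) - (φ a : EReal) := fun a ha => iInf₂_le a ha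
  -- bound on the cost values along the sequence
  have hbound : ∀ n, c (v n) (u n) ≤ ENNReal.ofReal (z + M) := by
    intro n
    have h1 : (c (v n) (u n) : EReal) < (z : EReal) + (φ (v n) : EReal) :=
      (EReal.sub_lt_iff (Or.inl (EReal.coe_ne_bot _)) (Or.inl (EReal.coe_ne_top _))).1 (hvlt n)
    have h2 : (z : EReal) + (φ (v n) : EReal) ≤ ((z + M : ℝ) : EReal) := by
      rw [← EReal.coe_add, EReal.coe_le_coe_iff]
      have := (abs_le.1 (hM (v n))).2
      linarith
    have h3 : (c (v n) (u n) : EReal) ≤ ((z + M : ℝ) : EReal) := (h1.trans_le h2).le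
    have h4 : ((z + M : ℝ) : EReal) ≤ ((ENNReal.ofReal (z + M) : ℝ≥0∞) : EReal) := by
      rw [EReal.coe_ennreal_ofReal]
      exact_mod_cast le_max_left _ _
    exact EReal.coe_ennreal_le_coe_ennreal_iff.1 (h3.trans h4)
  -- main compactness argument
  have hmain : ∀ w w' : ℕ → X, (∀ n, w n ∈ S) → Filter.Tendsto w' Filter.atTop (nhds x') →
      (∀ n, (c (w n) (w' n) : EReal) - (φ (w n) : EReal) < (z : EReal)) →
      IsCompact (closure (Set.range fun n => (w n, w' n))) → False := by
    intro w w' hwS hw' hwlt hcomp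
    obtain ⟨p, hp, ψ, hψmono, hψtend⟩ := hcomp.tendsto_subseq
      (fun n => subset_closure (Set.mem_range_self n))
    have h1 : Filter.Tendsto (fun n => w (ψ n)) Filter.atTop (nhds p.1) :=
      (continuous_fst.tendsto p).comp hψtend
    have h2 : Filter.Tendsto (fun n => w' (ψ n)) Filter.atTop (nhds p.2) :=
      (continuous_snd.tendsto p).comp hψtend
    have h3 : Filter.Tendsto (fun n => w' (ψ n)) Filter.atTop (nhds x') :=
      hw'.comp hψmono.tendsto_atTop
    have hpx : p.2 = x' := tendsto_nhds_unique h2 h3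
    have haS : p.1 ∈ S := hSclosed.mem_of_tendsto h1
      (Filter.Eventually.of_forall fun n => hwS (ψ n))
    have hzlt : (z : EReal) < (c p.1 x' : EReal) - (φ p.1 : EReal) :=
      lt_of_lt_of_le hz2 (hfle _ haS)
    have htend : Filter.Tendsto (fun n => (w (ψ n), w' (ψ n))) Filter.atTop (nhds (p.1, x')) := by
      rw [nhds_prod_eq]
      exact h1.prodMk (h3)
    have hev := htend.eventually (hg (p.1, x') (z : EReal) hzlt)
    obtain ⟨n, hn⟩ := hev.exists
    exact absurd (hwlt (ψ n)) (not_lt.2 hn.le)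
  rcases hcoer with hC | ⟨B, c₀, hBpos, hBtop, hc₀, hmin⟩
  · exact hmain v u hvS hu hvlt
      (hC v u (Metric.isBounded_range_of_tendsto u hu)
        ⟨ENNReal.ofReal (z + M), ENNReal.ofReal_ne_top, hbound⟩)
  · by_cases hfr : ∃ᶠ n in Filter.atTop, c₀ (v n) (u n) ≤ B
    · obtain ⟨ψ, hψ, hψB⟩ := Filter.extraction_of_frequently_atTop hfr
      refine hmain (v ∘ ψ) (u ∘ ψ) (fun n => hvS (ψ n)) (hu.comp hψ.tendsto_atTop)
        (fun n => hvlt (ψ n)) ?_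
      refine hc₀ (v ∘ ψ) (u ∘ ψ) ?_ ⟨B, hBtop, fun n => hψB n⟩
      exact (Metric.isBounded_range_of_tendsto u hu).subset
        (Set.range_comp_subset_range ψ u)
    · rw [Filter.not_frequently] at hfr
      obtain ⟨n, hn⟩ := hfr.exists
      have hcB : c (v n) (u n) = B := by
        rw [hmin]
        exact min_eq_right (not_le.1 hn).le
      have hle1 : f x' ≤ (c (v n) x' : EReal) - (φ (v n) : EReal) := hfle _ (hvS n)
      have hle2 : (c (v n) x' : EReal) ≤ (B : EReal) := by
        rw [hmin]
        exact EReal.coe_ennreal_le_coe_ennreal_iff.2 (min_le_right _ _)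
      have hle3 : (c (v n) x' : EReal) - (φ (v n) : EReal) ≤ (B : EReal) - (φ (v n) : EReal) :=
        EReal.sub_le_sub hle2 le_rfl
      have hlt : f x' < f x' := by
        calc f x' ≤ (c (v n) x' : EReal) - (φ (v n) : EReal) := hle1
          _ ≤ (B : EReal) - (φ (v n) : EReal) := hle3
          _ = (c (v n) (u n) : EReal) - (φ (v n) : EReal) := by rw [hcB]
          _ < (z : EReal) := hvlt n
          _ < f x' := hz2
      exact absurd hlt (lt_irrefl _)
end
end

section
/- Let α ≥ 0 with α ≠ 1 and let a₁, ..., a_K be real numbers. If α ∈ [0,1), then the function Z ↦ Σ_{i=1}^K exp_α( max{ −a_i − Z, −1/(1−α) } ) is continuous and strictly decreasing where positive, tends to 0 as Z → ∞ and to ∞ as Z → −∞, and there exists a unique Z ∈ ℝ at which it equals 1. If α > 1, then the function Z ↦ Σ_{i=1}^K exp_α( −a_i − Z ), defined for Z > 1/(1−α) − min_i a_i, is continuous and decreasing, tends to 0 as Z → ∞ and to ∞ as Z → (1/(1−α) − min_i a_i)⁺, and there exists a unique such Z at which it equals 1. -/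
/-!
Each summand is `exp_α` composed with the decreasing map `Z ↦ -a_i - Z`, so every claim reduces to
a property of `exp_α` on its domain: it is continuous and strictly increasing there; for `α < 1` it
vanishes at the left end of its domain (so the truncated sum is strictly decreasing wherever it is
positive) and tends to `∞` at `+∞`; for `α > 1` it tends to `0` at `-∞` and blows up at the right
end of its domain, reached by the summand with the smallest `a_i`. The intermediate value theorem
between the two limits gives a solution of `∑ = 1`, and strict monotonicity makes it unique.
-/

open Filter Topology
open scoped BigOperators

noncomputable section

/-- The `α`-exponential `exp_α(s) = ((1−α)s + 1)^{1/(1−α)}`. -/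
def expAlpha (α s : ℝ) : ℝ := ((1 - α) * s + 1) ^ (1 / (1 - α))

open Set

section ExpAlpha

variable {α : ℝ}

lemma expAlpha_base_neg_one_div (hα : α ≠ 1) : (1 - α) * -(1 / (1 - α)) + 1 = 0 := by
  rw [mul_neg, mul_one_div_cancel (sub_ne_zero.2 hα.symm)]
  ring

lemma expAlpha_neg_one_div (hα : α ≠ 1) : expAlpha α (-(1 / (1 - α))) = 0 := by
  rw [expAlpha, expAlpha_base_neg_one_div hα]
  exact Real.zero_rpow (one_div_ne_zero (sub_ne_zero.2 hα.symm))

lemma expAlpha_nonneg {s : ℝ} (hs : 0 ≤ (1 - α) * s + 1) : 0 ≤ expAlpha α s :=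
  Real.rpow_nonneg hs _

lemma expAlpha_base_nonneg (hα : α < 1) {s : ℝ} (hs : -(1 / (1 - α)) ≤ s) :
    0 ≤ (1 - α) * s + 1 := by
  have h := mul_le_mul_of_nonneg_left hs (sub_pos.2 hα).le
  linarith [expAlpha_base_neg_one_div hα.ne]

lemma expAlpha_base_pos (hα : 1 < α) {s : ℝ} (hs : s < -(1 / (1 - α))) :
    0 < (1 - α) * s + 1 := by
  have h := mul_lt_mul_of_neg_left hs (sub_neg.2 hα)
  linarith [expAlpha_base_neg_one_div hα.ne']

lemma strictMonoOn_expAlpha_of_lt_one (hα : α < 1) :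
    StrictMonoOn (expAlpha α) (Ici (-(1 / (1 - α)))) := fun s hs t _ hst =>
  Real.rpow_lt_rpow (expAlpha_base_nonneg hα hs)
    (by nlinarith [sub_pos.2 hα]) (one_div_pos.2 (sub_pos.2 hα))

lemma strictMonoOn_expAlpha_of_one_lt (hα : 1 < α) :
    StrictMonoOn (expAlpha α) (Iio (-(1 / (1 - α)))) := fun _ _ t ht hst =>
  Real.rpow_lt_rpow_of_neg (expAlpha_base_pos hα ht)
    (by nlinarith [sub_neg.2 hα]) (one_div_neg.2 (sub_neg.2 hα))

lemma continuousOn_expAlpha_of_one_lt (hα : 1 < α) :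
    ContinuousOn (expAlpha α) (Iio (-(1 / (1 - α)))) :=
  ContinuousOn.rpow_const (by fun_prop) fun _ hs => Or.inl (expAlpha_base_pos hα hs).ne'

lemma tendsto_expAlpha_atBot_of_one_lt (hα : 1 < α) : Tendsto (expAlpha α) atBot (𝓝 0) := by
  have hbase : Tendsto (fun s => (1 - α) * s + 1) atBot atTop :=
    tendsto_atTop_add_const_right _ _ (tendsto_id.const_mul_atBot_of_neg (sub_neg.2 hα))
  have h := tendsto_rpow_neg_atTop (neg_pos.2 (one_div_neg.2 (sub_neg.2 hα)))
  rw [neg_neg] at h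
  exact h.comp hbase

lemma tendsto_expAlpha_nhdsLT_of_one_lt (hα : 1 < α) :
    Tendsto (expAlpha α) (𝓝[<] (-(1 / (1 - α)))) atTop := by
  have hbase : Tendsto (fun s => (1 - α) * s + 1) (𝓝[<] (-(1 / (1 - α)))) (𝓝[>] 0) := by
    refine tendsto_nhdsWithin_iff.2
      ⟨?_, eventually_nhdsWithin_of_forall fun _ hs => expAlpha_base_pos hα hs⟩
    rw [← expAlpha_base_neg_one_div hα.ne']
    exact (Continuous.tendsto (by fun_prop) _).mono_left nhdsWithin_le_nhds
  exact (tendsto_rpow_neg_nhdsGT_zero (one_div_neg.2 (sub_neg.2 hα))).comp hbase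

end ExpAlpha

/-- For `α < 1`, the extension of `exp_α` by `0` to the left of its domain. -/
def truncExpAlpha (α t : ℝ) : ℝ := expAlpha α (max t (-(1 / (1 - α))))

section TruncExpAlpha

variable {α : ℝ}

lemma truncExpAlpha_eq_zero (hα : α ≠ 1) {t : ℝ} (ht : t ≤ -(1 / (1 - α))) :
    truncExpAlpha α t = 0 := by
  rw [truncExpAlpha, max_eq_right ht, expAlpha_neg_one_div hα]

lemma truncExpAlpha_nonneg (hα : α < 1) (t : ℝ) : 0 ≤ truncExpAlpha α t :=
  expAlpha_nonneg (expAlpha_base_nonneg hα (le_max_right _ _))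

lemma monotone_truncExpAlpha (hα : α < 1) : Monotone (truncExpAlpha α) := fun _ _ hst =>
  (strictMonoOn_expAlpha_of_lt_one hα).monotoneOn (mem_Ici.2 (le_max_right _ _))
    (mem_Ici.2 (le_max_right _ _)) (max_le_max hst le_rfl)

lemma truncExpAlpha_lt_of_pos (hα : α < 1) {s t : ℝ} (hs : 0 < truncExpAlpha α s)
    (hst : s < t) : truncExpAlpha α s < truncExpAlpha α t := by
  have hs' : -(1 / (1 - α)) < s := lt_of_not_ge fun h => hs.ne' (truncExpAlpha_eq_zero hα.ne h)
  rw [truncExpAlpha, truncExpAlpha, max_eq_left hs'.le, max_eq_left (hs'.trans hst).le]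
  exact strictMonoOn_expAlpha_of_lt_one hα hs'.le (hs'.trans hst).le hst

lemma continuous_truncExpAlpha (hα : α < 1) : Continuous (truncExpAlpha α) :=
  Continuous.rpow_const (by fun_prop) fun _ => Or.inr (one_div_nonneg.2 (sub_pos.2 hα).le)

lemma tendsto_truncExpAlpha_atBot (hα : α ≠ 1) : Tendsto (truncExpAlpha α) atBot (𝓝 0) :=
  tendsto_const_nhds.congr'
    ((eventually_le_atBot _).mono fun _ ht => (truncExpAlpha_eq_zero hα ht).symm)

lemma tendsto_truncExpAlpha_atTop (hα : α < 1) : Tendsto (truncExpAlpha α) atTop atTop := by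
  have hbase : Tendsto (fun t => (1 - α) * max t (-(1 / (1 - α))) + 1) atTop atTop :=
    tendsto_atTop_add_const_right _ _ <| Tendsto.const_mul_atTop (sub_pos.2 hα) <|
      tendsto_atTop_mono (fun t => le_max_left t _) tendsto_id
  exact (tendsto_rpow_atTop (one_div_pos.2 (sub_pos.2 hα))).comp hbase

end TruncExpAlpha

lemma tendsto_const_sub_nhdsGT (c z : ℝ) :
    Tendsto (fun Z => c - Z) (𝓝[>] z) (𝓝[<] (c - z)) :=
  tendsto_nhdsWithin_iff.2 ⟨(Continuous.tendsto (by fun_prop) z).mono_left nhdsWithin_le_nhds,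
    eventually_nhdsWithin_of_forall fun _ hZ => sub_lt_sub_left hZ c⟩

lemma neg_sub_lt_of_sub_ciInf_lt {ι : Type*} [Finite ι] (a : ι → ℝ) (i : ι) {d Z : ℝ}
    (hZ : d - ⨅ i, a i < Z) : -(a i) - Z < -d := by
  linarith [ciInf_le (Set.finite_range a).bddBelow i]

section FiniteSums

variable {ι : Type*} [Fintype ι]

lemma tendsto_sum_atTop_of_nonneg {X : Type*} {l : Filter X} {f : ι → X → ℝ}
    (hf : ∀ᶠ x in l, ∀ i, 0 ≤ f i x) {i₀ : ι} (hi₀ : Tendsto (f i₀) l atTop) :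
    Tendsto (fun x => ∑ i, f i x) l atTop :=
  tendsto_atTop_mono' l
    (hf.mono fun _ hx => Finset.single_le_sum (fun i _ => hx i) (Finset.mem_univ i₀)) hi₀

variable {g : ℝ → ℝ} (c : ι → ℝ)

lemma tendsto_sum_comp_sub_atTop (hg : Tendsto g atBot (𝓝 0)) :
    Tendsto (fun Z => ∑ i, g (c i - Z)) atTop (𝓝 0) := by
  simpa using tendsto_finsetSum Finset.univ fun i _ =>
    hg.comp (tendsto_atTop_atBot.2 fun b => ⟨c i - b, fun Z hZ => by linarith⟩)

lemma strictAntiOn_sum_comp_sub_of_pos (hg : Monotone g)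
    (hpos : ∀ ⦃s t⦄, 0 < g s → s < t → g s < g t) :
    StrictAntiOn (fun Z => ∑ i, g (c i - Z)) {Z | 0 < ∑ i, g (c i - Z)} := by
  intro Z₁ _ Z₂ hZ₂ h12
  obtain ⟨i, -, hi⟩ := Finset.exists_lt_of_sum_lt (f := fun _ => (0 : ℝ)) (by simpa using hZ₂)
  exact Finset.sum_lt_sum (fun j _ => hg (by linarith))
    ⟨i, Finset.mem_univ i, hpos hi (by linarith)⟩

lemma strictAntiOn_sum_comp_sub [Nonempty ι] {s t : Set ℝ} (hg : StrictMonoOn g t)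
    (hst : ∀ i, ∀ Z ∈ s, c i - Z ∈ t) : StrictAntiOn (fun Z => ∑ i, g (c i - Z)) s :=
  fun Z₁ h₁ Z₂ h₂ h12 => Finset.sum_lt_sum_of_nonempty Finset.univ_nonempty fun i _ =>
    hg (hst i Z₂ h₂) (hst i Z₁ h₁) (by linarith)

lemma continuousOn_sum_comp_sub {s t : Set ℝ} (hg : ContinuousOn g t)
    (hst : ∀ i, ∀ Z ∈ s, c i - Z ∈ t) : ContinuousOn (fun Z => ∑ i, g (c i - Z)) s :=
  continuousOn_finsetSum _ fun i _ => hg.comp (by fun_prop) (hst i)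

end FiniteSums

lemma existsUnique_eq_of_tendsto {X α : Type*} [TopologicalSpace X] [LinearOrder α]
    [TopologicalSpace α] [OrderClosedTopology α] {f : X → α} {s : Set X} (hs : IsPreconnected s)
    {l₁ l₂ : Filter X} [l₁.NeBot] [l₂.NeBot] (hl₁ : l₁ ≤ 𝓟 s) (hl₂ : l₂ ≤ 𝓟 s)
    (hf : ContinuousOn f s) {v c : α} (h₁ : Tendsto f l₁ (𝓝 v)) (h₂ : Tendsto f l₂ atTop)
    (hvc : v < c) (hinj : InjOn f {x ∈ s | v < f x}) : ∃! x, x ∈ s ∧ f x = c := by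
  obtain ⟨x, hxs, hx⟩ := hs.intermediate_value_Ioi hl₁ hl₂ hf h₁ h₂ hvc
  refine ⟨x, ⟨hxs, hx⟩, fun y ⟨hys, hy⟩ => hinj ⟨hys, ?_⟩ ⟨hxs, ?_⟩ (hy.trans hx.symm)⟩
  · exact hy ▸ hvc
  · exact hx ▸ hvc

theorem statement15_general (α : ℝ)
    {K : ℕ} (hK : 1 ≤ K) (a : Fin K → ℝ) :
    (α < 1 →
      (Continuous (fun Z : ℝ =>
          ∑ i, expAlpha α (max (-(a i) - Z) (-(1 / (1 - α))))) ∧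
       StrictAntiOn (fun Z : ℝ =>
          ∑ i, expAlpha α (max (-(a i) - Z) (-(1 / (1 - α)))))
          {Z : ℝ | 0 < ∑ i, expAlpha α (max (-(a i) - Z) (-(1 / (1 - α))))} ∧
       Tendsto (fun Z : ℝ =>
          ∑ i, expAlpha α (max (-(a i) - Z) (-(1 / (1 - α))))) atTop (𝓝 0) ∧
       Tendsto (fun Z : ℝ =>
          ∑ i, expAlpha α (max (-(a i) - Z) (-(1 / (1 - α))))) atBot atTop ∧
       (∃! Z : ℝ, ∑ i, expAlpha α (max (-(a i) - Z) (-(1 / (1 - α)))) = 1))) ∧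
    (1 < α →
      (ContinuousOn (fun Z : ℝ => ∑ i, expAlpha α (-(a i) - Z))
          (Set.Ioi (1 / (1 - α) - ⨅ i, a i)) ∧
       AntitoneOn (fun Z : ℝ => ∑ i, expAlpha α (-(a i) - Z))
          (Set.Ioi (1 / (1 - α) - ⨅ i, a i)) ∧
       Tendsto (fun Z : ℝ => ∑ i, expAlpha α (-(a i) - Z)) atTop (𝓝 0) ∧
       Tendsto (fun Z : ℝ => ∑ i, expAlpha α (-(a i) - Z))
          (𝓝[>] (1 / (1 - α) - ⨅ i, a i)) atTop ∧
       (∃! Z : ℝ, Z ∈ Set.Ioi (1 / (1 - α) - ⨅ i, a i) ∧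
          ∑ i, expAlpha α (-(a i) - Z) = 1))) := by
  have i₀ : Fin K := ⟨0, hK⟩
  refine ⟨fun hα => ?_, fun hα => ?_⟩
  · have hcont : Continuous fun Z => ∑ i, truncExpAlpha α (-(a i) - Z) := by
      have := continuous_truncExpAlpha hα
      fun_prop
    have hanti := strictAntiOn_sum_comp_sub_of_pos (fun i => -(a i))
      (monotone_truncExpAlpha hα) fun _ _ => truncExpAlpha_lt_of_pos hα
    have hzero := tendsto_sum_comp_sub_atTop (fun i => -(a i)) (tendsto_truncExpAlpha_atBot hα.ne)
    have hblow : Tendsto (fun Z => ∑ i, truncExpAlpha α (-(a i) - Z)) atBot atTop :=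
      tendsto_sum_atTop_of_nonneg (.of_forall fun _ _ => truncExpAlpha_nonneg hα _)
        ((tendsto_truncExpAlpha_atTop hα).comp
          (tendsto_atBot_atTop.2 fun b => ⟨-(a i₀) - b, fun Z hZ => by linarith⟩))
    refine ⟨hcont, hanti, hzero, hblow, ?_⟩
    simpa only [mem_univ, true_and, truncExpAlpha] using existsUnique_eq_of_tendsto
      isPreconnected_univ (le_principal_iff.2 univ_mem) (le_principal_iff.2 univ_mem)
      hcont.continuousOn hzero hblow one_pos (hanti.injOn.mono fun _ hx => hx.2)
  · have : Nonempty (Fin K) := ⟨i₀⟩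
    obtain ⟨i₁, hi₁⟩ := exists_eq_ciInf_of_finite (f := a)
    have hdom : ∀ i, ∀ Z ∈ Ioi (1 / (1 - α) - ⨅ i, a i), -(a i) - Z ∈ Iio (-(1 / (1 - α))) :=
      fun i _ hZ => neg_sub_lt_of_sub_ciInf_lt a i hZ
    have hanti := strictAntiOn_sum_comp_sub (fun i => -(a i))
      (strictMonoOn_expAlpha_of_one_lt hα) hdom
    have hcont := continuousOn_sum_comp_sub (fun i => -(a i))
      (continuousOn_expAlpha_of_one_lt hα) hdom
    have hzero := tendsto_sum_comp_sub_atTop (fun i => -(a i))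
      (tendsto_expAlpha_atBot_of_one_lt hα)
    have hedge : Tendsto (fun Z => -(a i₁) - Z) (𝓝[>] (1 / (1 - α) - ⨅ i, a i))
        (𝓝[<] (-(1 / (1 - α)))) := by
      have hlim : -(a i₁) - (1 / (1 - α) - ⨅ i, a i) = -(1 / (1 - α)) := by rw [← hi₁]; ring
      rw [← hlim]
      exact tendsto_const_sub_nhdsGT _ _
    have hblow : Tendsto (fun Z => ∑ i, expAlpha α (-(a i) - Z))
        (𝓝[>] (1 / (1 - α) - ⨅ i, a i)) atTop :=
      tendsto_sum_atTop_of_nonneg (eventually_nhdsWithin_of_forall fun Z hZ i =>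
          expAlpha_nonneg (expAlpha_base_pos hα (hdom i Z hZ)).le)
        ((tendsto_expAlpha_nhdsLT_of_one_lt hα).comp hedge)
    exact ⟨hcont, hanti.antitoneOn, hzero, hblow, existsUnique_eq_of_tendsto isPreconnected_Ioi
      (l₂ := 𝓝[>] _) (le_principal_iff.2 (Ioi_mem_atTop _)) inf_le_right hcont hzero hblow one_pos
      (hanti.injOn.mono fun _ hx => hx.1)⟩

/-- Remark 1.12: properties of the normalization map `Z` for the
`α`-logarithmic loss, in both regimes `α ∈ [0,1)` and `α > 1`. -/
theorem statement15 (α : ℝ) (hα0 : 0 ≤ α) (hα1 : α ≠ 1)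
    {K : ℕ} (hK : 1 ≤ K) (a : Fin K → ℝ) :
    (α < 1 →
      (Continuous (fun Z : ℝ =>
          ∑ i, expAlpha α (max (-(a i) - Z) (-(1 / (1 - α))))) ∧
       StrictAntiOn (fun Z : ℝ =>
          ∑ i, expAlpha α (max (-(a i) - Z) (-(1 / (1 - α)))))
          {Z : ℝ | 0 < ∑ i, expAlpha α (max (-(a i) - Z) (-(1 / (1 - α))))} ∧
       Tendsto (fun Z : ℝ =>
          ∑ i, expAlpha α (max (-(a i) - Z) (-(1 / (1 - α))))) atTop (𝓝 0) ∧
       Tendsto (fun Z : ℝ =>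
          ∑ i, expAlpha α (max (-(a i) - Z) (-(1 / (1 - α))))) atBot atTop ∧
       (∃! Z : ℝ, ∑ i, expAlpha α (max (-(a i) - Z) (-(1 / (1 - α)))) = 1))) ∧
    (1 < α →
      (ContinuousOn (fun Z : ℝ => ∑ i, expAlpha α (-(a i) - Z))
          (Set.Ioi (1 / (1 - α) - ⨅ i, a i)) ∧
       AntitoneOn (fun Z : ℝ => ∑ i, expAlpha α (-(a i) - Z))
          (Set.Ioi (1 / (1 - α) - ⨅ i, a i)) ∧
       Tendsto (fun Z : ℝ => ∑ i, expAlpha α (-(a i) - Z)) atTop (𝓝 0) ∧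
       Tendsto (fun Z : ℝ => ∑ i, expAlpha α (-(a i) - Z))
          (𝓝[>] (1 / (1 - α) - ⨅ i, a i)) atTop ∧
       (∃! Z : ℝ, Z ∈ Set.Ioi (1 / (1 - α) - ⨅ i, a i) ∧
          ∑ i, expAlpha α (-(a i) - Z) = 1))) :=
  statement15_general α hK a
end
end

section
/- Let S be a nonempty finite set and let (a_i)_{i∈S} be real numbers. Then the maximum over m in the probability simplex Δ_S of Σ_{i∈S} m_i a_i − max_{i∈S} m_i is attained at the uniform probability measure over some nonempty subset of S (i.e., at some m of the form m_i = 1/|S'| for i ∈ S' and m_i = 0 otherwise, for a nonempty S' ⊆ S). -/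
open scoped BigOperators

noncomputable section

theorem key_lemma {S : Type*} [Fintype S] [Nonempty S] [DecidableEq S]
    (a : S → ℝ) (G : ℝ)
    (hG : ∀ T : Finset S, T.Nonempty → ∑ i ∈ T, a i ≤ G * T.card + 1) :
    ∀ n : ℕ, ∀ m : S → ℝ, ((Finset.univ.image m) \ {0}).card ≤ n → (∀ i, 0 ≤ m i) →
      ∑ i, m i * a i ≤ G * (∑ i, m i) + Finset.univ.sup' Finset.univ_nonempty m := by
  intro n
  induction n with
  | zero =>
    intro m hcard hpos
    have hzero : ∀ i, m i = 0 := by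
      intro i
      by_contra h
      have : m i ∈ (Finset.univ.image m) \ {0} := by
        simp [Finset.mem_sdiff, h]
      have := Finset.card_pos.mpr ⟨_, this⟩
      omega
    have h1 : ∑ i, m i * a i = 0 := by simp [hzero]
    have h2 : (∑ i, m i) = 0 := by simp [hzero]
    have h3 : Finset.univ.sup' Finset.univ_nonempty m = 0 := by
      apply le_antisymm
      · exact Finset.sup'_le _ _ (fun i _ => (hzero i).le)
      · exact Finset.le_sup'_of_le _ (Finset.mem_univ (Classical.arbitrary S)) (hzero _).ge
    rw [h1, h2, h3]; simp
  | succ n ih =>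
    intro m hcard hpos
    set M := Finset.univ.sup' Finset.univ_nonempty m with hMdef
    have hMmem : ∃ i, m i = M := by
      obtain ⟨i, _, hi⟩ := Finset.exists_mem_eq_sup' Finset.univ_nonempty m
      exact ⟨i, hi.symm⟩
    have hMle : ∀ i, m i ≤ M := fun i => Finset.le_sup' m (Finset.mem_univ i)
    have hM0 : 0 ≤ M := le_trans (hpos _) (hMle (Classical.arbitrary S))
    by_cases hM : M = 0
    · -- m ≡ 0
      have hzero : ∀ i, m i = 0 := fun i => le_antisymm (hM ▸ hMle i) (hpos i)
      have h1 : ∑ i, m i * a i = 0 := by simp [hzero]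
      have h2 : (∑ i, m i) = 0 := by simp [hzero]
      rw [h1, h2]; simp [hM]
    · have hMpos : 0 < M := lt_of_le_of_ne hM0 (Ne.symm hM)
      set T : Finset S := Finset.univ.filter (fun i => m i = M) with hTdef
      have hTne : T.Nonempty := by
        obtain ⟨i, hi⟩ := hMmem
        exact ⟨i, by simp [hTdef, hi]⟩
      by_cases hTu : T = Finset.univ
      · -- m constant = M
        have hconst : ∀ i, m i = M := by
          intro i
          have : i ∈ T := hTu ▸ Finset.mem_univ i
          simpa [hTdef] using this
        have h1 : ∑ i, m i * a i = M * ∑ i, a i := by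
          rw [Finset.mul_sum]; exact Finset.sum_congr rfl (fun i _ => by rw [hconst i])
        have h2 : (∑ i, m i) = M * ((Finset.univ : Finset S).card : ℝ) := by
          rw [Finset.sum_congr rfl (fun i _ => hconst i), Finset.sum_const, nsmul_eq_mul, mul_comm]
        have h3 := hG Finset.univ Finset.univ_nonempty
        calc ∑ i, m i * a i = M * ∑ i, a i := h1
          _ ≤ M * (G * ((Finset.univ : Finset S).card : ℝ) + 1) := by
              exact mul_le_mul_of_nonneg_left h3 hM0
          _ = G * (M * ((Finset.univ : Finset S).card : ℝ)) + M := by ring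
          _ = G * (∑ i, m i) + M := by rw [h2]
      · -- Tᶜ nonempty
        have hTcne : Tᶜ.Nonempty := by
          rw [Finset.nonempty_iff_ne_empty, ne_eq, Finset.compl_eq_empty_iff]
          exact hTu
        set μ : ℝ := Tᶜ.sup' hTcne m with hμdef
        obtain ⟨j, hjmem, hjμ⟩ := Finset.exists_mem_eq_sup' hTcne m
        have hμle : ∀ i ∈ Tᶜ, m i ≤ μ := fun i hi => Finset.le_sup' m hi
        have hμ0 : 0 ≤ μ := by rw [hμdef, hjμ]; exact hpos j
        have hμM : μ < M := by
          have hj : m j ≠ M := by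
            have := Finset.mem_compl.mp hjmem
            simpa [hTdef] using this
          rw [hμdef, hjμ]; exact lt_of_le_of_ne (hMle j) hj
        set m' : S → ℝ := fun i => if i ∈ T then μ else m i with hm'def
        have hm'pos : ∀ i, 0 ≤ m' i := by
          intro i; simp only [hm'def]; split
          · exact hμ0
          · exact hpos i
        -- measure decrease
        have hsub : (Finset.univ.image m') \ {0} ⊆ ((Finset.univ.image m) \ {0}).erase M := by
          intro x hx
          obtain ⟨hxim, hx0⟩ := Finset.mem_sdiff.mp hx
          obtain ⟨i, _, hxi⟩ := Finset.mem_image.mp hxim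
          simp only [Finset.mem_singleton] at hx0
          by_cases hiT : i ∈ T
          · have hxμ : x = μ := by rw [← hxi]; simp [hm'def, hiT]
            refine Finset.mem_erase.mpr ⟨by rw [hxμ]; exact hμM.ne, ?_⟩
            refine Finset.mem_sdiff.mpr ⟨?_, by simpa using hx0⟩
            exact Finset.mem_image.mpr ⟨j, Finset.mem_univ j, by rw [hxμ]; exact (hμdef.trans hjμ).symm⟩
          · have hxm : x = m i := by rw [← hxi]; simp [hm'def, hiT]
            have hiM : m i ≠ M := by simpa [hTdef] using hiT
            refine Finset.mem_erase.mpr ⟨by rw [hxm]; exact hiM, ?_⟩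
            refine Finset.mem_sdiff.mpr ⟨?_, by simpa using hx0⟩
            exact Finset.mem_image.mpr ⟨i, Finset.mem_univ i, hxm.symm⟩
        have hMmem' : M ∈ (Finset.univ.image m) \ {0} := by
          obtain ⟨i, hi⟩ := hMmem
          refine Finset.mem_sdiff.mpr ⟨Finset.mem_image.mpr ⟨i, Finset.mem_univ i, hi⟩, ?_⟩
          simpa using hM
        have hcard' : ((Finset.univ.image m') \ {0}).card ≤ n := by
          have h1 := Finset.card_le_card hsub
          rw [Finset.card_erase_of_mem hMmem'] at h1
          omega
        have hih := ih m' hcard' hm'pos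
        -- sup' m' = μ
        have hsup' : Finset.univ.sup' Finset.univ_nonempty m' = μ := by
          apply le_antisymm
          · apply Finset.sup'_le
            intro i _
            simp only [hm'def]
            split
            · exact le_refl μ
            · next hiT => exact hμle i (Finset.mem_compl.mpr hiT)
          · obtain ⟨i, hi⟩ := hTne
            refine Finset.le_sup'_of_le _ (Finset.mem_univ i) ?_
            simp [hm'def, hi]
        rw [hsup'] at hih
        -- sums
        have hsplit : ∀ i, m i = m' i + (if i ∈ T then M - μ else 0) := by
          intro i
          simp only [hm'def]
          by_cases hiT : i ∈ T
          · have : m i = M := by simpa [hTdef] using hiT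
            simp [hiT, this]
          · simp [hiT]
        have hsum1 : ∑ i, m i * a i = ∑ i, m' i * a i + (M - μ) * ∑ i ∈ T, a i := by
          have h : ∀ i, m i * a i = m' i * a i + (if i ∈ T then (M - μ) * a i else 0) := by
            intro i
            rw [hsplit i]
            by_cases hiT : i ∈ T <;> simp [hm'def, hiT] <;> ring
          rw [Finset.sum_congr rfl (fun i _ => h i), Finset.sum_add_distrib]
          congr 1
          rw [Finset.sum_ite_mem, Finset.univ_inter, Finset.mul_sum]
        have hsum2 : (∑ i, m i) = (∑ i, m' i) + (M - μ) * T.card := by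
          have : ∀ i, m i = m' i + (if i ∈ T then M - μ else 0) := hsplit
          rw [Finset.sum_congr rfl (fun i _ => this i), Finset.sum_add_distrib]
          congr 1
          rw [Finset.sum_ite_mem, Finset.univ_inter, Finset.sum_const, nsmul_eq_mul, mul_comm]
        have hTbound := hG T hTne
        calc ∑ i, m i * a i = ∑ i, m' i * a i + (M - μ) * ∑ i ∈ T, a i := hsum1
          _ ≤ (G * (∑ i, m' i) + μ) + (M - μ) * (G * T.card + 1) := by
              apply add_le_add hih
              exact mul_le_mul_of_nonneg_left hTbound (by linarith)
          _ = G * ((∑ i, m' i) + (M - μ) * T.card) + M := by ring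
          _ = G * (∑ i, m i) + M := by rw [← hsum2]


/-- Lemma E.1: the maximum over the simplex `Δ_S` of
`∑_i m_i a_i − max_i m_i` is attained at the uniform probability vector over
some nonempty subset of `S`. -/
theorem statement16 {S : Type*} [Fintype S] [Nonempty S] [DecidableEq S]
    (a : S → ℝ) :
    ∃ S' : Finset S, S'.Nonempty ∧
      (fun i => if i ∈ S' then (1 : ℝ) / S'.card else 0) ∈ stdSimplex ℝ S ∧
      ∀ m ∈ stdSimplex ℝ S,
        (∑ i, m i * a i) - (Finset.univ.sup' Finset.univ_nonempty m)
          ≤ (∑ i, (if i ∈ S' then (1 : ℝ) / S'.card else 0) * a i)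
              - (Finset.univ.sup' Finset.univ_nonempty
                  (fun i => if i ∈ S' then (1 : ℝ) / S'.card else 0)) := by
  classical
  set g : Finset S → ℝ := fun T => (∑ i ∈ T, a i - 1) / T.card with hgdef
  set Pw : Finset (Finset S) := (Finset.univ : Finset S).powerset.filter Finset.Nonempty with hPw
  have hPwne : Pw.Nonempty := ⟨Finset.univ, by simp [hPw, Finset.univ_nonempty]⟩
  obtain ⟨S₀, hS₀mem, hS₀max⟩ := Finset.exists_max_image Pw g hPwne
  have hS₀ne : S₀.Nonempty := (Finset.mem_filter.mp hS₀mem).2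
  set G : ℝ := g S₀ with hGdef
  have hcard₀ : (0 : ℝ) < S₀.card := by
    exact_mod_cast Finset.card_pos.mpr hS₀ne
  have hG : ∀ T : Finset S, T.Nonempty → ∑ i ∈ T, a i ≤ G * T.card + 1 := by
    intro T hT
    have hTmem : T ∈ Pw := by simp [hPw, hT]
    have h1 := hS₀max T hTmem
    have hcT : (0 : ℝ) < T.card := by exact_mod_cast Finset.card_pos.mpr hT
    rw [hgdef] at h1
    simp only at h1
    rw [div_le_iff₀ hcT] at h1
    linarith
  set u : S → ℝ := fun i => if i ∈ S₀ then (1 : ℝ) / S₀.card else 0 with hudef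
  have husum : ∑ i, u i = 1 := by
    rw [hudef]
    simp only
    rw [Finset.sum_ite_mem, Finset.univ_inter, Finset.sum_const, nsmul_eq_mul]
    field_simp
  have hupos : ∀ i, 0 ≤ u i := by
    intro i
    rw [hudef]
    simp only
    split
    · positivity
    · exact le_refl 0
  have husup : Finset.univ.sup' Finset.univ_nonempty u = 1 / S₀.card := by
    apply le_antisymm
    · apply Finset.sup'_le
      intro i _
      rw [hudef]; simp only
      split
      · exact le_refl _
      · positivity
    · obtain ⟨i, hi⟩ := hS₀ne
      refine Finset.le_sup'_of_le _ (Finset.mem_univ i) ?_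
      rw [hudef]; simp [hi]
  have husa : ∑ i, u i * a i = (1 / S₀.card) * ∑ i ∈ S₀, a i := by
    have hterm : ∀ x, (if x ∈ S₀ then (1:ℝ)/S₀.card else 0) * a x
        = if x ∈ S₀ then (1/(S₀.card:ℝ)) * a x else 0 := by
      intro x; split <;> simp
    rw [hudef]
    simp only
    rw [Finset.sum_congr rfl (fun x _ => hterm x), Finset.sum_ite_mem, Finset.univ_inter,
      Finset.mul_sum]
  have hval : ∑ i, u i * a i - Finset.univ.sup' Finset.univ_nonempty u = G := by
    rw [husa, husup, hGdef, hgdef]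
    simp only
    field_simp
  refine ⟨S₀, hS₀ne, ⟨hupos, husum⟩, ?_⟩
  intro m hm
  obtain ⟨hmpos, hmsum⟩ := hm
  have := key_lemma a G hG ((Finset.univ.image m) \ {0}).card m le_rfl hmpos
  rw [hmsum, mul_one] at this
  have h2 : ∑ i, m i * a i - Finset.univ.sup' Finset.univ_nonempty m ≤ G := by linarith
  calc ∑ i, m i * a i - Finset.univ.sup' Finset.univ_nonempty m ≤ G := h2
    _ = ∑ i, u i * a i - Finset.univ.sup' Finset.univ_nonempty u := hval.symm
end
end

section
/- Let ℓ_01 be the 0-1 loss, ℓ_01(v, i) = 1 − v_i. A tuple (φ_i)_{i∈Y} of real-valued functions satisfies, for every A ⊆ Y and every x_A ∈ spt(μ_A), sup_{m_A ∈ Δ_A} { Σ_{i∈A} m_i φ_i(x_i) + ℓ_A(m_A) − c_A(x_A, m_A) } ≤ 0 (with ℓ_A(m_A) = 1 − max_{i∈A} m_i) if and only if Σ_{i∈A} φ_i(x_i) ≤ 1 − |A| + c_A(x_A) for every A ⊆ Y and every x_A ∈ spt(μ_A), where c_A(x_A) := inf_{x̃∈X} Σ_{i∈A} c(x_i, x̃).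 Consequently, the dual problem of Theorem 1.4 for ℓ_01 is equivalent via the change of variables g_i = 1 + φ_i to the problem: sup over (g_i) of Σ_i ∫ g_i dμ_i subject to Σ_{i∈A} g_i(x_i) ≤ 1 + c_A(x_A) for all A ⊆ Y and x_A ∈ spt(μ_A); in particular the value of the former is 1 minus the value of the latter, and (φ_i) solves the former if and only if (g_i = 1 + φ_i) solves the latter. -/
open MeasureTheory Set Filter Topology Bornology
open scoped ENNReal BigOperators NNReal

noncomputable section

namespace AdvRobust

variable {X : Type*} {Y : Type*}

/-- The 0-1 loss `ℓ_01(v,i) = 1 − v_i` (as a `[0,∞]`-valued loss). -/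
def loss01 {Y : Type*} [Fintype Y] : (Y → ℝ) → Y → ℝ≥0∞ :=
  fun v i => ENNReal.ofReal (1 - v i)

/-- `c_A(x_A) = inf_{x̃} ∑_{i ∈ A} c(x_i, x̃)`. -/
def costAinf {X Y : Type*} (c : X → X → ℝ≥0∞) (A : Finset Y) (x : Y → X) : ℝ≥0∞ :=
  ⨅ x' : X, ∑ i ∈ A, c (x i) x'

/-! For the 0-1 loss, `ℓ_A(m) = 1 - max_{i ∈ A} m_i`, attained at the vertex of `Δ_Y` at an
argmax of `m`. Testing the dual constraint at the uniform weight on `A` gives the linear constraint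
for `A`. Conversely, the layer-cake decomposition
`∑_i m_i q_i = ∫_0^{max m} ∑_{m_i > t} q_i dt` reduces an arbitrary weight to uniform weights on
the superlevel sets of `m`, where the linear constraints apply. The rest is the change of
variables `g_i = 1 + φ_i`, which shifts the objective by `∑_i μ_i(X) = 1`. -/

section FiniteSums

variable {ι : Type*}

theorem sum_mul_le_of_forall_subset_sum_le_one {A : Finset ι} {m q : ι → ℝ} {K : ℝ}
    (hm : ∀ i ∈ A, 0 ≤ m i) (hK : 0 ≤ K) (hmK : ∀ i ∈ A, m i ≤ K)
    (hq : ∀ B ⊆ A, (∀ i ∈ B, 0 < m i) → ∑ i ∈ B, q i ≤ 1) : ∑ i ∈ A, m i * q i ≤ K := by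
  classical
  induction A using Finset.strongInduction generalizing m K with
  | H A ih =>
  rcases A.eq_empty_or_nonempty with rfl | hA
  · simpa using hK
  obtain ⟨i₀, hi₀, hmin⟩ := A.exists_min_image m hA
  set t := m i₀
  set A' := A.filter (fun i => t < m i)
  have hA'A : A' ⊆ A := Finset.filter_subset _ _
  have hsplit : ∑ i ∈ A, m i * q i = t * ∑ i ∈ A, q i + ∑ i ∈ A', (m i - t) * q i := by
    rw [Finset.sum_filter_of_ne fun i hi hne =>
        (hmin i hi).lt_of_ne fun h => hne (by rw [← h, sub_self, zero_mul]),
      Finset.mul_sum, ← Finset.sum_add_distrib]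
    exact Finset.sum_congr rfl fun i _ => by ring
  have hbottom : t * ∑ i ∈ A, q i ≤ t := by
    rcases (show 0 ≤ t from hm i₀ hi₀).eq_or_lt with ht | ht
    · rw [← ht, zero_mul]
    · simpa using mul_le_mul_of_nonneg_left
        (hq A subset_rfl fun i hi => ht.trans_le (hmin i hi)) ht.le
  have hlayers : ∑ i ∈ A', (m i - t) * q i ≤ K - t :=
    ih A' (Finset.filter_ssubset.2 ⟨i₀, hi₀, lt_irrefl t⟩) (m := fun i => m i - t) (K := K - t)
      (fun i hi => sub_nonneg.2 (Finset.mem_filter.1 hi).2.le) (sub_nonneg.2 (hmK i₀ hi₀))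
      (fun i hi => sub_le_sub_right (hmK i (hA'A hi)) t)
      (fun B hB hpos => hq B (hB.trans hA'A) fun i hi => by
        have := hpos i hi; have := hm i₀ hi₀; linarith)
  linarith

theorem ofReal_sum_mul_sub_le_sum_ofReal_mul {A : Finset ι} {m p : ι → ℝ} {d : ι → ℝ≥0∞}
    {K : ℝ} (hm : ∀ i ∈ A, 0 ≤ m i) (hK : 0 ≤ K) (hmK : ∀ i ∈ A, m i ≤ K)
    (h : ∀ B ⊆ A, (∀ i ∈ B, 0 < m i) →
      ENNReal.ofReal (∑ i ∈ B, p i - (1 - (B.card : ℝ))) ≤ ∑ i ∈ B, d i) :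
    ENNReal.ofReal (∑ i ∈ A, m i * (p i + 1) - K) ≤ ∑ i ∈ A, ENNReal.ofReal (m i) * d i := by
  by_cases htop : ∃ i ∈ A, 0 < m i ∧ d i = ⊤
  · obtain ⟨i, hi, hmi, hdi⟩ := htop
    have : ENNReal.ofReal (m i) * d i = ⊤ := by simp [hdi, hmi]
    rw [ENNReal.sum_eq_top.2 ⟨i, hi, this⟩]
    exact le_top
  push Not at htop
  have hfin : ∀ B ⊆ A, (∀ i ∈ B, 0 < m i) →
      ∑ i ∈ B, d i = ENNReal.ofReal (∑ i ∈ B, (d i).toReal) := fun B hB hpos => by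
    rw [ENNReal.ofReal_sum_of_nonneg fun i _ => ENNReal.toReal_nonneg]
    exact Finset.sum_congr rfl fun i hi =>
      (ENNReal.ofReal_toReal (htop i (hB hi) (hpos i hi))).symm
  have hsum : ∑ i ∈ A, ENNReal.ofReal (m i) * d i
      = ENNReal.ofReal (∑ i ∈ A, m i * (d i).toReal) := by
    rw [ENNReal.ofReal_sum_of_nonneg fun i hi => mul_nonneg (hm i hi) ENNReal.toReal_nonneg]
    refine Finset.sum_congr rfl fun i hi => ?_
    rcases (hm i hi).eq_or_lt with hmi | hmi
    · simp [← hmi]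
    · rw [ENNReal.ofReal_mul hmi.le, ENNReal.ofReal_toReal (htop i hi hmi)]
  have hq : ∀ B ⊆ A, (∀ i ∈ B, 0 < m i) → ∑ i ∈ B, (p i + 1 - (d i).toReal) ≤ 1 :=
    fun B hB hpos => by
      have hB' := h B hB hpos
      rw [hfin B hB hpos, ENNReal.ofReal_le_ofReal_iff
        (Finset.sum_nonneg fun i _ => ENNReal.toReal_nonneg)] at hB'
      simp only [Finset.sum_sub_distrib, Finset.sum_add_distrib, Finset.sum_const, nsmul_eq_mul,
        mul_one]
      linarith
  have := sum_mul_le_of_forall_subset_sum_le_one hm hK hmK hq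
  rw [hsum]
  apply ENNReal.ofReal_le_ofReal
  simp only [mul_sub, Finset.sum_sub_distrib] at this
  linarith

theorem ofReal_le_of_ofReal_inv_mul_le {t y : ℝ} {C : ℝ≥0∞} (ht : 0 < t)
    (h : ENNReal.ofReal (t⁻¹ * y) ≤ ENNReal.ofReal t⁻¹ * C) : ENNReal.ofReal y ≤ C := by
  calc ENNReal.ofReal y = ENNReal.ofReal t * ENNReal.ofReal (t⁻¹ * y) := by
        rw [← ENNReal.ofReal_mul ht.le, mul_inv_cancel_left₀ ht.ne']
    _ ≤ ENNReal.ofReal t * (ENNReal.ofReal t⁻¹ * C) := by gcongr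
    _ = C := by
        rw [← mul_assoc, ← ENNReal.ofReal_mul ht.le, mul_inv_cancel₀ ht.ne', ENNReal.ofReal_one,
          one_mul]

end FiniteSums

theorem coe_le_coe_add_coe_ennreal_iff (s t : ℝ) (C : ℝ≥0∞) :
    (s : EReal) ≤ (t : EReal) + (C : EReal) ↔ ENNReal.ofReal (s - t) ≤ C := by
  induction C using ENNReal.recTopCoe with
  | top => simp [EReal.add_top_of_ne_bot (EReal.coe_ne_bot t)]
  | coe C =>
    rw [EReal.coe_nnreal_eq_coe_real, ← EReal.coe_add, EReal.coe_le_coe_iff,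
      ← ENNReal.ofReal_coe_nnreal, ENNReal.ofReal_le_ofReal_iff C.coe_nonneg]
    constructor <;> intro <;> linarith

theorem coe_sub_coe_sub_cancel (r : ℝ) (x : EReal) : (r : EReal) - ((r : EReal) - x) = x := by
  induction x using EReal.rec with
  | bot => rw [EReal.coe_sub_bot, EReal.sub_top]
  | coe y => rw [← EReal.coe_sub, ← EReal.coe_sub, sub_sub_cancel]
  | top => rw [EReal.sub_top, EReal.coe_sub_bot]

theorem coe_sub_iSup {ι : Sort*} (r : ℝ) (a : ι → EReal) :
    (r : EReal) - ⨆ i, a i = ⨅ i, ((r : EReal) - a i) := by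
  refine le_antisymm (le_iInf fun i => EReal.sub_le_sub le_rfl (le_iSup a i)) ?_
  have hle : ⨆ i, a i ≤ (r : EReal) - ⨅ i, ((r : EReal) - a i) := iSup_le fun i => by
    simpa only [coe_sub_coe_sub_cancel] using
      EReal.sub_le_sub (le_refl (r : EReal)) (iInf_le (fun i => (r : EReal) - a i) i)
  simpa only [coe_sub_coe_sub_cancel] using EReal.sub_le_sub (le_refl (r : EReal)) hle

theorem coe_eq_coe_sub_iff (r a : ℝ) (S : EReal) :
    (a : EReal) = (r : EReal) - S ↔ ((r - a : ℝ) : EReal) = S := by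
  constructor
  · intro h
    rw [EReal.coe_sub, h, coe_sub_coe_sub_cancel]
  · intro h
    rw [← h, EReal.coe_sub, coe_sub_coe_sub_cancel]

section ZeroOneLoss

variable {X Y : Type*}

theorem nonempty_of_mem_simplexOn [Fintype Y] {A : Finset Y} {m : Y → ℝ}
    (hm : m ∈ simplexOn A) : A.Nonempty := by
  rcases A.eq_empty_or_nonempty with rfl | hA
  · simpa using hm.2.2
  · exact hA

theorem le_one_of_mem_simplexOn [Fintype Y] {A : Finset Y} {m : Y → ℝ} (hm : m ∈ simplexOn A)
    {j : Y} (hj : j ∈ A) : m j ≤ 1 :=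
  hm.2.2 ▸ Finset.single_le_sum (fun i _ => hm.1 i) hj

theorem sum_ofReal_mul_loss01 [Fintype Y] {A : Finset Y} {m v : Y → ℝ} (hm : ∀ i, 0 ≤ m i)
    (hv : v ∈ stdSimplex ℝ Y) :
    ∑ i ∈ A, ENNReal.ofReal (m i) * loss01 v i
      = ENNReal.ofReal (∑ i ∈ A, m i - ∑ i ∈ A, m i * v i) := by
  have hv1 : ∀ i, 0 ≤ 1 - v i := fun i => sub_nonneg.2 (mem_Icc_of_mem_stdSimplex hv i).2
  rw [← Finset.sum_sub_distrib, ENNReal.ofReal_sum_of_nonneg fun i _ => by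
    simpa [mul_sub] using mul_nonneg (hm i) (hv1 i)]
  exact Finset.sum_congr rfl fun i _ => by
    rw [loss01, ← ENNReal.ofReal_mul (hm i), mul_sub, mul_one]

theorem lossOn_loss01 [Fintype Y] {A : Finset Y} {m : Y → ℝ} (hm : m ∈ simplexOn A) {j : Y}
    (hj : j ∈ A) (hmax : ∀ i ∈ A, m i ≤ m j) :
    lossOn loss01 A m = ENNReal.ofReal (1 - m j) := by
  classical
  refine le_antisymm ?_ (le_iInf₂ fun v hv => ?_)
  · refine (iInf₂_le (Pi.single j 1) (single_mem_stdSimplex ℝ j)).trans_eq ?_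
    rw [sum_ofReal_mul_loss01 hm.1 (single_mem_stdSimplex ℝ j), hm.2.2]
    simp [Pi.single_apply, hj]
  · rw [sum_ofReal_mul_loss01 hm.1 hv, hm.2.2]
    refine ENNReal.ofReal_le_ofReal (sub_le_sub_left ?_ 1)
    calc ∑ i ∈ A, m i * v i ≤ ∑ i ∈ A, m j * v i :=
          Finset.sum_le_sum fun i hi => mul_le_mul_of_nonneg_right (hmax i hi) (hv.1 i)
      _ = m j * ∑ i ∈ A, v i := Finset.mul_sum _ _ _ |>.symm
      _ ≤ m j * 1 := mul_le_mul_of_nonneg_left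
          (hv.2 ▸ Finset.sum_le_sum_of_subset_of_nonneg (Finset.subset_univ A)
            fun i _ _ => hv.1 i) (hm.1 j)
      _ = m j := mul_one _

theorem costOn_of_forall_eq (c : X → X → ℝ≥0∞) {A : Finset Y} (x : Y → X) {m : Y → ℝ} {t : ℝ}
    (ht : 0 < t) (hm : ∀ i ∈ A, m i = t) :
    costOn c A x m = ENNReal.ofReal t * costAinf c A x := by
  rw [costOn, costAinf, ENNReal.mul_iInf_of_ne (ENNReal.ofReal_pos.2 ht).ne' ENNReal.ofReal_ne_top]
  exact iInf_congr fun x' => by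
    rw [Finset.mul_sum]
    exact Finset.sum_congr rfl fun i hi => by rw [hm i hi]

theorem dualTerm_loss01_nonpos_iff [Fintype Y] (c : X → X → ℝ≥0∞) {A : Finset Y} (x : Y → X)
    {m : Y → ℝ} (a : ℝ) (hm : m ∈ simplexOn A) {j : Y} (hj : j ∈ A)
    (hmax : ∀ i ∈ A, m i ≤ m j) :
    (a : EReal) + (lossOn loss01 A m : EReal) - (costOn c A x m : EReal) ≤ 0 ↔
      ENNReal.ofReal (a + (1 - m j)) ≤ costOn c A x m := by
  rw [lossOn_loss01 hm hj hmax, EReal.sub_nonpos, EReal.coe_ennreal_ofReal,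
    max_eq_left (sub_nonneg.2 (le_one_of_mem_simplexOn hm hj)), ← EReal.coe_add]
  simpa using coe_le_coe_add_coe_ennreal_iff (a + (1 - m j)) 0 (costOn c A x m)

end ZeroOneLoss

section ZeroOneDual

open scoped BoundedContinuousFunction

variable {X Y : Type*} [Fintype Y]

theorem dualConstraint_loss01_iff [TopologicalSpace X] [MeasurableSpace X]
    (c : X → X → ℝ≥0∞) (μ : Y → Measure X) (φ : Y → X → ℝ) :
    dualConstraint c loss01 μ φ ↔
      ∀ (A : Finset Y) (x : Y → X), (∀ i ∈ A, x i ∈ msupport (μ i)) →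
        ((∑ i ∈ A, φ i (x i) : ℝ) : EReal)
          ≤ ((1 - (A.card : ℝ) : ℝ) : EReal) + (costAinf c A x : EReal) := by
  classical
  simp only [coe_le_coe_add_coe_ennreal_iff]
  constructor
  · intro h A x hx
    rcases A.eq_empty_or_nonempty with rfl | hA
    · simp [ENNReal.ofReal_of_nonpos]
    have hk : (0 : ℝ) < A.card := Nat.cast_pos.2 hA.card_pos
    obtain ⟨j, hj⟩ := hA
    let m : Y → ℝ := fun i => if i ∈ A then (A.card : ℝ)⁻¹ else 0
    have hmA : ∀ i ∈ A, m i = (A.card : ℝ)⁻¹ := fun i hi => if_pos hi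
    have hm : m ∈ simplexOn A := by
      refine ⟨fun i => ?_, fun i hi => if_neg hi, ?_⟩
      · by_cases hi : i ∈ A <;> simp [m, hi]
      · rw [Finset.sum_congr rfl hmA, Finset.sum_const, nsmul_eq_mul, mul_inv_cancel₀ hk.ne']
    have hterm := (dualTerm_loss01_nonpos_iff c x _ hm hj fun i hi =>
      ((hmA i hi).trans (hmA j hj).symm).le).1 (iSup₂_le_iff.1 (h A x hx) m hm)
    rw [costOn_of_forall_eq c x (inv_pos.2 hk) hmA,
      Finset.sum_congr rfl fun i hi => by rw [hmA i hi], ← Finset.mul_sum, hmA j hj] at hterm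
    refine ofReal_le_of_ofReal_inv_mul_le hk (hterm.trans_eq' ?_)
    congr 1
    field_simp
    ring
  · intro h A x hx
    refine iSup₂_le fun m hm => ?_
    obtain ⟨j, hj, hmax⟩ := A.exists_max_image m (nonempty_of_mem_simplexOn hm)
    rw [dualTerm_loss01_nonpos_iff c x _ hm hj hmax]
    refine le_iInf fun x' => ?_
    refine (ofReal_sum_mul_sub_le_sum_ofReal_mul (p := fun i => φ i (x i))
      (d := fun i => c (x i) x') (fun i _ => hm.1 i) (hm.1 j) hmax
      fun B hB _ => (h B x fun i hi => hx i (hB hi)).trans (iInf_le _ x')).trans_eq' ?_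
    congr 1
    simp only [mul_add, mul_one, Finset.sum_add_distrib, hm.2.2]
    ring

def linearConstraint [TopologicalSpace X] [MeasurableSpace X]
    (c : X → X → ℝ≥0∞) (μ : Y → Measure X) (g : Y → X → ℝ) : Prop :=
  ∀ (A : Finset Y) (x : Y → X), (∀ i ∈ A, x i ∈ msupport (μ i)) →
    ((∑ i ∈ A, g i (x i) : ℝ) : EReal) ≤ (1 : EReal) + (costAinf c A x : EReal)

theorem dualConstraint_loss01_iff_linearConstraint [TopologicalSpace X] [MeasurableSpace X]
    (c : X → X → ℝ≥0∞) (μ : Y → Measure X) (φ : Y → X → ℝ) :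
    dualConstraint c loss01 μ φ ↔ linearConstraint c μ fun i x => 1 + φ i x := by
  rw [dualConstraint_loss01_iff]
  refine forall₃_congr fun A x _ => ?_
  rw [Finset.sum_add_distrib, Finset.sum_const, nsmul_one, ← EReal.coe_one,
    coe_le_coe_add_coe_ennreal_iff, coe_le_coe_add_coe_ennreal_iff]
  ring_nf

theorem sum_integral_one_add [MetricSpace X] [MeasurableSpace X] [OpensMeasurableSpace X]
    {μ : Y → Measure X} [∀ i, IsFiniteMeasure (μ i)] (hμ1 : ∑ i, μ i univ = 1) (φ : Y → X →ᵇ ℝ) :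
    ∑ i, ∫ x, (1 + φ i) x ∂μ i = 1 + ∑ i, ∫ x, φ i x ∂μ i := by
  have hmass : ∑ i, (μ i).real univ = 1 := by
    simp only [measureReal_def]
    rw [← ENNReal.toReal_sum fun i _ => measure_ne_top (μ i) univ, hμ1, ENNReal.toReal_one]
  have hint : ∀ i, ∫ x, (1 + φ i) x ∂μ i = (μ i).real univ + ∫ x, φ i x ∂μ i := fun i => by
    change ∫ x, (1 + φ i x) ∂μ i = _
    rw [integral_add (integrable_const 1) ((φ i).integrable (μ i)), integral_const,
      smul_eq_mul, mul_one]
  rw [Finset.sum_congr rfl fun i _ => hint i, Finset.sum_add_distrib, hmass]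

variable [MetricSpace X] [MeasurableSpace X] [OpensMeasurableSpace X]
  (c : X → X → ℝ≥0∞) (μ : Y → Measure X) [∀ i, IsFiniteMeasure (μ i)]

theorem dualValueCb_loss01 (hμ1 : ∑ i, μ i univ = 1) :
    dualValueCb c loss01 μ = 1 - ⨆ (g : Y → X →ᵇ ℝ) (_ : linearConstraint c μ fun i => g i),
      (((∑ i, ∫ x, g i x ∂μ i) : ℝ) : EReal) := by
  simp_rw [← EReal.coe_one, coe_sub_iSup, ← EReal.coe_sub]
  conv_rhs => rw [← (Equiv.addLeft (1 : Y → X →ᵇ ℝ)).iInf_comp]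
  refine iInf_congr fun φ => iInf_congr_Prop ?_ fun _ => ?_
  · exact dualConstraint_loss01_iff_linearConstraint c μ _
  · change _ = ((1 - ∑ i, ∫ x, (1 + φ i) x ∂μ i : ℝ) : EReal)
    rw [sum_integral_one_add hμ1]
    ring_nf

theorem dualValueCb_loss01_attained_iff (hμ1 : ∑ i, μ i univ = 1) (φ : Y → X →ᵇ ℝ) :
    (dualConstraint c loss01 μ (fun i => (φ i : X → ℝ)) ∧
        (((- ∑ i, ∫ x, φ i x ∂(μ i)) : ℝ) : EReal) = dualValueCb c loss01 μ) ↔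
      (linearConstraint c μ (fun i => ⇑(1 + φ i)) ∧
        (((∑ i, ∫ x, (1 + φ i) x ∂(μ i)) : ℝ) : EReal)
          = ⨆ (g : Y → X →ᵇ ℝ) (_ : linearConstraint c μ fun i => g i),
              (((∑ i, ∫ x, g i x ∂(μ i)) : ℝ) : EReal)) := by
  rw [dualValueCb_loss01 c μ hμ1, sum_integral_one_add hμ1, ← EReal.coe_one, coe_eq_coe_sub_iff]
  exact and_congr (dualConstraint_loss01_iff_linearConstraint c μ _) (by ring_nf)

end ZeroOneDual

theorem statement18_general
    {X Y : Type*} [MetricSpace X]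
    [MeasurableSpace X] [BorelSpace X]
    [Fintype Y]
    (c : X → X → ℝ≥0∞)
    (μ : Y → Measure X) (hμfin : ∀ i, IsFiniteMeasure (μ i))
    (hμ1 : ∑ i, μ i Set.univ = 1) :
    (∀ φ : Y → X → ℝ,
      dualConstraint c loss01 μ φ ↔
        ∀ (A : Finset Y) (x : Y → X), (∀ i ∈ A, x i ∈ msupport (μ i)) →
          ((∑ i ∈ A, φ i (x i) : ℝ) : EReal)
            ≤ ((1 - (A.card : ℝ) : ℝ) : EReal) + (costAinf c A x : EReal)) ∧
    (dualValueCb c loss01 μ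
      = (1 : EReal) -
        ⨆ (g : Y → BoundedContinuousFunction X ℝ)
          (_ : ∀ (A : Finset Y) (x : Y → X), (∀ i ∈ A, x i ∈ msupport (μ i)) →
            ((∑ i ∈ A, g i (x i) : ℝ) : EReal)
              ≤ (1 : EReal) + (costAinf c A x : EReal)),
          (((∑ i, ∫ x, g i x ∂(μ i)) : ℝ) : EReal)) ∧
    (∀ φ : Y → BoundedContinuousFunction X ℝ,
      (dualConstraint c loss01 μ (fun i => (φ i : X → ℝ)) ∧
        (((- ∑ i, ∫ x, φ i x ∂(μ i)) : ℝ) : EReal) = dualValueCb c loss01 μ)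
      ↔
      ((∀ (A : Finset Y) (x : Y → X), (∀ i ∈ A, x i ∈ msupport (μ i)) →
          ((∑ i ∈ A, (1 + φ i) (x i) : ℝ) : EReal)
            ≤ (1 : EReal) + (costAinf c A x : EReal)) ∧
        (((∑ i, ∫ x, (1 + φ i) x ∂(μ i)) : ℝ) : EReal)
          = ⨆ (g : Y → BoundedContinuousFunction X ℝ)
              (_ : ∀ (A : Finset Y) (x : Y → X), (∀ i ∈ A, x i ∈ msupport (μ i)) →
                ((∑ i ∈ A, g i (x i) : ℝ) : EReal)
                  ≤ (1 : EReal) + (costAinf c A x : EReal)),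
              (((∑ i, ∫ x, g i x ∂(μ i)) : ℝ) : EReal))) := by
  have := hμfin
  exact ⟨dualConstraint_loss01_iff c μ, dualValueCb_loss01 c μ hμ1,
    dualValueCb_loss01_attained_iff c μ hμ1⟩

/-- Appendix E: for the 0-1 loss, the dual constraint is equivalent to the
linear constraints `∑_{i∈A} φ_i(x_i) ≤ 1 − |A| + c_A(x_A)`; consequently the
dual problem (1.12) is equivalent, via `g_i = 1 + φ_i`, to problem (1.7), with
value `1` minus the value of the latter. -/
theorem statement18
    {X Y : Type*} [MetricSpace X] [TopologicalSpace.SeparableSpace X] [CompleteSpace X]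
    [MeasurableSpace X] [BorelSpace X] [Nonempty X]
    [Fintype Y] [Nonempty Y]
    (c : X → X → ℝ≥0∞)
    (μ : Y → Measure X) (hμfin : ∀ i, IsFiniteMeasure (μ i))
    (hμ1 : ∑ i, μ i Set.univ = 1) :
    (∀ φ : Y → X → ℝ,
      dualConstraint c loss01 μ φ ↔
        ∀ (A : Finset Y) (x : Y → X), (∀ i ∈ A, x i ∈ msupport (μ i)) →
          ((∑ i ∈ A, φ i (x i) : ℝ) : EReal)
            ≤ ((1 - (A.card : ℝ) : ℝ) : EReal) + (costAinf c A x : EReal)) ∧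
    (dualValueCb c loss01 μ
      = (1 : EReal) -
        ⨆ (g : Y → BoundedContinuousFunction X ℝ)
          (_ : ∀ (A : Finset Y) (x : Y → X), (∀ i ∈ A, x i ∈ msupport (μ i)) →
            ((∑ i ∈ A, g i (x i) : ℝ) : EReal)
              ≤ (1 : EReal) + (costAinf c A x : EReal)),
          (((∑ i, ∫ x, g i x ∂(μ i)) : ℝ) : EReal)) ∧
    (∀ φ : Y → BoundedContinuousFunction X ℝ,
      (dualConstraint c loss01 μ (fun i => (φ i : X → ℝ)) ∧
        (((- ∑ i, ∫ x, φ i x ∂(μ i)) : ℝ) : EReal) = dualValueCb c loss01 μ)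
      ↔
      ((∀ (A : Finset Y) (x : Y → X), (∀ i ∈ A, x i ∈ msupport (μ i)) →
          ((∑ i ∈ A, (1 + φ i) (x i) : ℝ) : EReal)
            ≤ (1 : EReal) + (costAinf c A x : EReal)) ∧
        (((∑ i, ∫ x, (1 + φ i) x ∂(μ i)) : ℝ) : EReal)
          = ⨆ (g : Y → BoundedContinuousFunction X ℝ)
              (_ : ∀ (A : Finset Y) (x : Y → X), (∀ i ∈ A, x i ∈ msupport (μ i)) →
                ((∑ i ∈ A, g i (x i) : ℝ) : EReal)
                  ≤ (1 : EReal) + (costAinf c A x : EReal)),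
              (((∑ i, ∫ x, g i x ∂(μ i)) : ℝ) : EReal))) :=
  statement18_general c μ hμfin hμ1

end AdvRobust
end
end
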